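/- arXiv:2011.10129 — 5 statements merged into one kernel-verified Lean document; each statement's English description precedes it below -/
import Mathlib

section
/- Let F be a field containing a primitive n-th root of unity ζ and let λ, μ ∈ F^*. The symbol algebra (λ, μ; F; ζ)_n is a central simple F-algebra of dimension n^2 over F. -/
/-!
Conjugation by `x` and by `y⁻¹` acts diagonally on the monomial basis `xⁱ yʲ`, with eigenvalues
`ζʲ` and `ζⁱ`, and since `ζ` is a primitive `n`-th root of unity these pairs of eigenvalues tell
the monomials apart. A central element is fixed by both conjugations, hence a multiple of `1`.
A nonzero two-sided ideal is stable under both conjugations; in it, an element with the fewest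
monomials is a single monomial (otherwise subtracting a suitable eigenvalue multiple shortens
it), and monomials are units.
-/

namespace Module.Basis

section Diagonal

variable {ι R M : Type*} [CommSemiring R] [AddCommMonoid M] [Module R M] (b : Basis ι R M)
  {g : Module.End R M} {d : ι → R}

theorem repr_apply_of_apply_eq_smul (hg : ∀ i, g (b i) = d i • b i) (m : M) (i : ι) :
    b.repr (g m) i = d i * b.repr m i := by
  classical
  have : Finsupp.lapply i ∘ₗ b.repr.toLinearMap ∘ₗ g =
      d i • (Finsupp.lapply i ∘ₗ b.repr.toLinearMap) :=
    b.ext fun j => by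
      by_cases hij : j = i
      · subst hij; simp [hg]
      · simp [hg, hij]
  exact LinearMap.congr_fun this m

theorem eq_repr_smul_of_forall_ne {m : M} {p : ι} (h : ∀ q ≠ p, b.repr m q = 0) :
    m = b.repr m p • b p :=
  b.ext_elem fun q => by
    by_cases hqp : q = p
    · subst hqp; simp
    · simp [h q hqp, Ne.symm hqp]

end Diagonal

section Field

variable {ι κ K M : Type*} [Field K] [AddCommGroup M] [Module K M] (b : Basis ι K M)
  {f : κ → Module.End K M} {c : κ → ι → K}

theorem repr_sub_smul_apply {g : Module.End K M} {d : ι → K} (hg : ∀ i, g (b i) = d i • b i)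
    (m : M) (q i : ι) : b.repr (g m - d q • m) i = (d i - d q) * b.repr m i := by
  simp [b.repr_apply_of_apply_eq_smul hg, sub_mul]

theorem support_repr_sub_smul_ssubset {g : Module.End K M} {d : ι → K}
    (hg : ∀ i, g (b i) = d i • b i) {m : M} {q : ι} (hq : b.repr m q ≠ 0) :
    (b.repr (g m - d q • m)).support ⊂ (b.repr m).support := by
  refine (Finset.ssubset_iff_of_subset fun i hi => ?_).2 ⟨q, Finsupp.mem_support_iff.2 hq, ?_⟩
  · rw [Finsupp.mem_support_iff, repr_sub_smul_apply b hg] at hi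
    exact Finsupp.mem_support_iff.2 (right_ne_zero_of_mul hi)
  · rw [Finsupp.mem_support_iff, not_not, repr_sub_smul_apply b hg, sub_self, zero_mul]

theorem eq_repr_smul_of_forall_apply_eq_self (hf : ∀ k i, f k (b i) = c k i • b i)
    (hc : Function.Injective (Function.swap c)) {p : ι} (hp : ∀ k, c k p = 1) {m : M}
    (hm : ∀ k, f k m = m) : m = b.repr m p • b p := by
  refine b.eq_repr_smul_of_forall_ne fun q hqp => ?_
  obtain ⟨k, hk⟩ := Function.ne_iff.1 (hc.ne hqp)
  have h := b.repr_apply_of_apply_eq_smul (hf k) m q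
  rw [hm k] at h
  have : (c k q - 1) * b.repr m q = 0 := by rw [sub_mul, ← h, one_mul, sub_self]
  exact (mul_eq_zero.1 this).resolve_left (sub_ne_zero.2 (by simpa [hp k] using hk))

theorem exists_apply_mem_of_forall_mapsTo (hf : ∀ k i, f k (b i) = c k i • b i)
    (hc : Function.Injective (Function.swap c)) {N : Submodule K M}
    (hN : ∀ k, Set.MapsTo (f k) N N) {m : M} (hm : m ∈ N) (hm₀ : m ≠ 0) : ∃ p, b p ∈ N := by
  induction hs : (b.repr m).support.card using Nat.strong_induction_on generalizing m with
  | _ s ih =>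
  obtain ⟨p, hp⟩ : ∃ p, b.repr m p ≠ 0 := by
    by_contra! h
    exact hm₀ (b.ext_elem fun i => by simp [h i])
  by_cases hsingle : ∀ q ≠ p, b.repr m q = 0
  · refine ⟨p, ?_⟩
    have hmp := b.eq_repr_smul_of_forall_ne hsingle
    rw [hmp] at hm
    simpa [hp] using N.smul_mem (b.repr m p)⁻¹ hm
  push Not at hsingle
  obtain ⟨q, hqp, hq⟩ := hsingle
  obtain ⟨k, hk⟩ := Function.ne_iff.1 (hc.ne hqp.symm)
  refine ih _ ?_ (N.sub_mem (hN k hm) (N.smul_mem (c k q) hm)) ?_ rfl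
  · exact hs ▸ Finset.card_lt_card (b.support_repr_sub_smul_ssubset (hf k) hq)
  · intro h
    have := b.repr_sub_smul_apply (hf k) m q p
    rw [h, map_zero, Finsupp.zero_apply] at this
    exact mul_ne_zero (sub_ne_zero.2 hk) hp this.symm

end Field

section Algebra

variable {ι κ K A : Type*} [Field K] [Ring A] [Algebra K A] (b : Basis ι K A)
  {g : κ → Aˣ} {c : κ → ι → K}

theorem isCentral_of_conj_eq_smul (hg : ∀ k i, ↑(g k)⁻¹ * b i * g k = c k i • b i)
    (hc : Function.Injective (Function.swap c)) {p : ι} (hp : b p = 1) :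
    Algebra.IsCentral K A := by
  have hf (k : κ) (i : ι) : LinearMap.mulLeftRight K ((↑(g k)⁻¹ : A), (g k : A)) (b i) =
      c k i • b i := hg k i
  have hcp (k : κ) : c k p = 1 :=
    smul_left_injective K (b.ne_zero p) (by simpa [hp] using (hg k p).symm)
  refine ⟨fun z hz => ?_⟩
  have hfix (k : κ) : LinearMap.mulLeftRight K ((↑(g k)⁻¹ : A), (g k : A)) z = z := by
    rw [LinearMap.mulLeftRight_apply, mul_assoc, ← Subalgebra.mem_center_iff.1 hz,
      Units.inv_mul_cancel_left]
  rw [b.eq_repr_smul_of_forall_apply_eq_self hf hc hcp hfix, hp]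
  exact Subalgebra.smul_mem _ (Subalgebra.one_mem _) _

theorem isSimpleRing_of_conj_eq_smul (hg : ∀ k i, ↑(g k)⁻¹ * b i * g k = c k i • b i)
    (hc : Function.Injective (Function.swap c)) (hb : ∀ i, IsUnit (b i)) [Nontrivial A] :
    IsSimpleRing A := by
  refine IsSimpleRing.of_eq_bot_or_eq_top fun J => or_iff_not_imp_left.2 fun hJ => ?_
  obtain ⟨a, haJ, ha₀⟩ : ∃ a ∈ J, a ≠ 0 := by
    by_contra! h
    exact hJ (eq_bot_iff.2 fun a ha => (TwoSidedIdeal.mem_bot _).2 (h a ha))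
  obtain ⟨p, hp⟩ := b.exists_apply_mem_of_forall_mapsTo (N := (J.asIdeal).restrictScalars K)
    (f := fun k => LinearMap.mulLeftRight K ((↑(g k)⁻¹ : A), (g k : A))) hg hc
    (fun k m hm => J.mul_mem_right _ _ (J.mul_mem_left _ _ (TwoSidedIdeal.mem_asIdeal.1 hm)))
    (TwoSidedIdeal.mem_asIdeal.2 haJ) ha₀
  obtain ⟨u, hu⟩ := hb p
  refine J.eq_top ?_
  have := J.mul_mem_left (↑u⁻¹ : A) _ (TwoSidedIdeal.mem_asIdeal.1 hp)
  rwa [← hu, Units.inv_mul] at this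

end Algebra

end Module.Basis

section SymbolAlgebra

variable {R A : Type*} [CommSemiring R] [Semiring A] [Algebra R A] {ζ : R} {x y : A}

theorem pow_mul_pow_eq_smul_of_mul_eq_smul (hyx : y * x = ζ • (x * y)) (i j : ℕ) :
    y ^ j * x ^ i = ζ ^ (i * j) • (x ^ i * y ^ j) := by
  have hy (i : ℕ) : y * x ^ i = ζ ^ i • (x ^ i * y) := by
    induction i with
    | zero => simp
    | succ i ih =>
      rw [pow_succ, ← mul_assoc, ih, smul_mul_assoc, mul_assoc, hyx, mul_smul_comm, smul_smul,
        ← pow_succ, ← mul_assoc]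
  induction j with
  | zero => simp
  | succ j ih =>
    rw [pow_succ, mul_assoc, hy, mul_smul_comm, ← mul_assoc, ih, smul_mul_assoc, smul_smul,
      mul_assoc, ← pow_succ, ← pow_add, mul_add_one, add_comm (i * j)]

theorem Units.inv_mul_pow_mul_pow_mul (u : Aˣ) (hyu : y * u = ζ • (u * y)) (i j : ℕ) :
    ↑u⁻¹ * (↑u ^ i * y ^ j) * u = ζ ^ j • (↑u ^ i * y ^ j) := by
  have := pow_mul_pow_eq_smul_of_mul_eq_smul hyu 1 j
  simp only [pow_one, one_mul] at this
  rw [mul_assoc, mul_assoc, this, mul_smul_comm, mul_smul_comm, ← mul_assoc (↑u ^ i : A),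
    ← pow_succ, pow_succ', mul_assoc, Units.inv_mul_cancel_left]

theorem Units.mul_pow_mul_pow_mul_inv (v : Aˣ) (hvx : v * x = ζ • (x * v)) (i j : ℕ) :
    ↑v * (x ^ i * ↑v ^ j) * ↑v⁻¹ = ζ ^ i • (x ^ i * ↑v ^ j) := by
  have := pow_mul_pow_eq_smul_of_mul_eq_smul hvx i 1
  simp only [pow_one, mul_one] at this
  rw [← mul_assoc, this, smul_mul_assoc, smul_mul_assoc, mul_assoc, mul_assoc,
    ← mul_assoc (v : A), ← pow_succ', pow_succ, Units.mul_inv_cancel_right]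

end SymbolAlgebra

theorem isUnit_of_pow_eq_algebraMap {K A : Type*} [Field K] [Ring A] [Algebra K A] {n : ℕ}
    (hn : n ≠ 0) {a : A} {c : K} (hc : c ≠ 0) (ha : a ^ n = algebraMap K A c) : IsUnit a :=
  (isUnit_pow_iff hn).1 (ha ▸ hc.isUnit.map (algebraMap K A))

/-- Let `F` be a field containing a primitive `n`-th root of unity `ζ` and `lam, mu ∈ Fˣ`.
The symbol algebra `(lam, mu; F; ζ)ₙ` — the `F`-algebra with generators `x, y` satisfying
`xⁿ = lam`, `yⁿ = mu`, `y*x = ζ•(x*y)`, with basis `{xⁱyʲ}_{0 ≤ i,j < n}` — is a central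
simple `F`-algebra of dimension `n²` over `F`. -/
theorem stmt_4 (n : ℕ) (hn : 0 < n) (F : Type*) [Field F] (ζ : F)
    (hζ : IsPrimitiveRoot ζ n) (lam mu : F) (hlam : lam ≠ 0) (hmu : mu ≠ 0)
    (A : Type*) [Ring A] [Algebra F A] (x y : A)
    (hx : x ^ n = algebraMap F A lam) (hy : y ^ n = algebraMap F A mu)
    (hyx : y * x = ζ • (x * y))
    (b : Module.Basis (Fin n × Fin n) F A)
    (hb : ∀ i j : Fin n, b (i, j) = x ^ (i : ℕ) * y ^ (j : ℕ)) :
    Algebra.IsCentral F A ∧ IsSimpleRing A ∧ Module.finrank F A = n ^ 2 := by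
  have : NeZero n := ⟨hn.ne'⟩
  have : Nontrivial A := nontrivial_of_ne (b (0, 0)) 0 (b.ne_zero _)
  obtain ⟨u, rfl⟩ := isUnit_of_pow_eq_algebraMap hn.ne' hlam hx
  obtain ⟨v, rfl⟩ := isUnit_of_pow_eq_algebraMap hn.ne' hmu hy
  let c : Fin 2 → Fin n × Fin n → F := ![fun p => ζ ^ (p.2 : ℕ), fun p => ζ ^ (p.1 : ℕ)]
  have hconj (k : Fin 2) (p : Fin n × Fin n) :
      ↑(![u, v⁻¹] k)⁻¹ * b p * ↑(![u, v⁻¹] k) = c k p • b p := by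
    fin_cases k
    · simpa [hb, c] using u.inv_mul_pow_mul_pow_mul hyx p.1 p.2
    · simpa [hb, c] using v.mul_pow_mul_pow_mul_inv hyx p.1 p.2
  have hc : Function.Injective (Function.swap c) := fun p q h => by
    have h₀ := congr_fun h 0
    have h₁ := congr_fun h 1
    simp only [Function.swap, c, Matrix.cons_val_zero, Matrix.cons_val_one] at h₀ h₁
    exact Prod.ext (Fin.ext (hζ.pow_inj p.1.isLt q.1.isLt h₁))
      (Fin.ext (hζ.pow_inj p.2.isLt q.2.isLt h₀))
  refine ⟨b.isCentral_of_conj_eq_smul hconj hc (p := (0, 0)) (by simp [hb]),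
    b.isSimpleRing_of_conj_eq_smul hconj hc fun p => ?_, ?_⟩
  · rw [hb]
    exact (u ^ (p.1 : ℕ) * v ^ (p.2 : ℕ)).isUnit
  · rw [Module.finrank_eq_card_basis b, Fintype.card_prod, Fintype.card_fin, sq]
end

section
/- Let p be an odd prime, ζ a primitive complex p-th root of unity and F = Q(ζ). Then there exists λ ∈ Q^* such that ζ is not in the image of the norm map of the extension F(λ^{1/p})/F. -/
/-!
Take `lam = q` for a prime `q ≡ 1 + p (mod p²)` (Dirichlet). Since `p ∤ [F : ℚ] = p - 1`, `q` is
not a `p`-th power in `F` (compare `q`-adic valuations of norms to `ℚ`), so `X ^ p - q` is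
irreducible and every `k ∈ F(z)` is `g(z)` with `deg g < p`. Its norm is `∏ⱼ g(ζʲ z) = R(q)`,
where `R(Xᵖ) = ∏ⱼ g(ζʲ X)`.

Because `p ∣ q - 1`, Hensel's lemma gives a primitive `p`-th root of unity `w ∈ ℚ_q`, and `F`
embeds into `ℚ_q` with `ζ ↦ w`. Give `X` the weight `c = q^(-1/p)` (a Gauss norm): as `deg g < p`,
the monomials of `g` have pairwise distinct weights, so a single monomial `gᵢ Xⁱ` dominates and
`R(q) = gᵢᵖ qⁱ` up to strictly smaller terms. If `R(q) = w`, a unit, then `i = 0` and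
`w ≡ g₀ᵖ (mod q)`. But `w` reduces to an element of order `p` of `(ℤ/q)ˣ`, and as `p² ∤ q - 1`,
no element of order `p` of this cyclic group is a `p`-th power.
-/

open Polynomial IntermediateField

theorem prod_range_pow_eq_one_of_odd {M : Type*} [CommMonoid M] {n : ℕ} (hn : Odd n) {w : M}
    (hw : w ^ n = 1) : ∏ j ∈ Finset.range n, w ^ j = 1 := by
  obtain ⟨k, rfl⟩ := hn
  have hsum : ∑ j ∈ Finset.range (2 * k + 1), j = (2 * k + 1) * k := by
    have := Finset.sum_range_id_mul_two (2 * k + 1)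
    simp only [add_tsub_cancel_right] at this
    nlinarith
  rw [Finset.prod_pow_eq_pow_sum, hsum, pow_mul, hw, one_pow]

theorem orderOf_eq_mul_self_of_orderOf_pow_eq {G : Type*} [Monoid G] {p : ℕ} (hp : p.Prime)
    {a : G} (h : orderOf (a ^ p) = p) : orderOf a = p * p := by
  have hpow : a ^ p ≠ 1 := fun h1 ↦ hp.one_lt.ne' (by rw [← h, h1, orderOf_one])
  have hpp : (a ^ p) ^ p = 1 := by
    calc (a ^ p) ^ p = (a ^ p) ^ orderOf (a ^ p) := by rw [h]
      _ = 1 := pow_orderOf_eq_one _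
  have hdvd : orderOf a ∣ p ^ 2 := orderOf_dvd_of_pow_eq_one (by rwa [sq, pow_mul])
  obtain ⟨k, hk, hka⟩ := (Nat.dvd_prime_pow hp).1 hdvd
  interval_cases k
  · exact absurd (orderOf_dvd_iff_pow_eq_one.mp (by rw [hka, pow_zero]; exact one_dvd p)) hpow
  · exact absurd (orderOf_dvd_iff_pow_eq_one.mp (by rw [hka, pow_one])) hpow
  · rw [hka, sq]

theorem IsNonarchimedean.apply_prod_add_sub_prod_lt {S ι : Type*} [CommRing S] [Nontrivial S]
    {N : AbsoluteValue S ℝ} (hna : IsNonarchimedean N) {s : Finset ι} {a b : ι → S} {M : ℝ}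
    (ha : ∀ j ∈ s, N (a j) ≤ M) (hb : ∀ j ∈ s, N (b j) < M) :
    N (∏ j ∈ s, (a j + b j) - ∏ j ∈ s, a j) < M ^ s.card := by
  classical
  induction s using Finset.induction_on with
  | empty => simp
  | insert j s hj ih =>
    have hM : 0 < M := (N.nonneg _).trans_lt (hb j (Finset.mem_insert_self _ _))
    have hab : ∀ i ∈ s, N (a i + b i) ≤ M := fun i hi ↦ (hna _ _).trans
      (max_le (ha i (Finset.mem_insert_of_mem hi)) (hb i (Finset.mem_insert_of_mem hi)).le)
    have hP : N (∏ i ∈ s, (a i + b i)) ≤ M ^ s.card := by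
      rw [map_prod, ← Finset.prod_const]
      exact Finset.prod_le_prod (fun i _ ↦ N.nonneg _) hab
    have ih' := ih (fun i hi ↦ ha i (Finset.mem_insert_of_mem hi))
      (fun i hi ↦ hb i (Finset.mem_insert_of_mem hi))
    rw [Finset.prod_insert hj, Finset.prod_insert hj, Finset.card_insert_of_notMem hj, pow_succ']
    calc N ((a j + b j) * ∏ i ∈ s, (a i + b i) - a j * ∏ i ∈ s, a i)
        = N (a j * (∏ i ∈ s, (a i + b i) - ∏ i ∈ s, a i) + b j * ∏ i ∈ s, (a i + b i)) := by
          ring_nf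
      _ ≤ max (N (a j) * N (∏ i ∈ s, (a i + b i) - ∏ i ∈ s, a i))
            (N (b j) * N (∏ i ∈ s, (a i + b i))) := by
          rw [← map_mul, ← map_mul]; exact hna _ _
      _ < M * M ^ s.card := max_lt
          (mul_lt_mul_of_le_of_lt_of_nonneg_of_pos (ha j (Finset.mem_insert_self _ _)) ih'
            (N.nonneg _) hM)
          (mul_lt_mul_of_lt_of_le_of_nonneg_of_pos (hb j (Finset.mem_insert_self _ _)) hP
            (N.nonneg _) (pow_pos hM _))

namespace Polynomial

/-- For a primitive `n`-th root of unity `w` and a root `z` of an irreducible `X ^ n - a`, the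
value of `normForm w n g` at `z` is the norm of `g z` from `F⟮z⟯`. -/
noncomputable def normForm {R : Type*} [CommSemiring R] (w : R) (n : ℕ) (g : R[X]) : R[X] :=
  ∏ j ∈ Finset.range n, g.comp (C (w ^ j) * X)

section NormForm

variable {R : Type*} [CommRing R] (w : R) (n : ℕ) (g : R[X])

theorem map_normForm {S : Type*} [CommRing S] (f : R →+* S) :
    (normForm w n g).map f = normForm (f w) n (g.map f) := by
  simp [normForm, Polynomial.map_prod, Polynomial.map_comp]

theorem aeval_normForm {A : Type*} [CommRing A] [Algebra R A] (x : A) :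
    aeval x (normForm w n g) = ∏ j ∈ Finset.range n, aeval (algebraMap R A w ^ j * x) g := by
  simp only [normForm, map_prod, aeval_comp, map_mul, aeval_C, aeval_X, map_pow]

variable {w n}

theorem normForm_comp_C_mul_X [IsDomain R] (hw : w ^ n = 1) :
    (normForm w n g).comp (C w * X) = normForm w n g := by
  rcases eq_or_ne g 0 with rfl | hg
  · simp [normForm]
  set f : ℕ → R[X] := fun j ↦ g.comp (C (w ^ j) * X)
  have hshift : ∀ j, (f j).comp (C w * X) = f (j + 1) := fun j ↦ by
    simp only [f, comp_assoc, mul_comp, C_comp, X_comp, pow_succ, C_mul, mul_assoc]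
  have hf0 : f 0 ≠ 0 := by simpa [f] using hg
  -- substituting `w * X` shifts the factors cyclically, as `f n = f 0`
  refine mul_right_cancel₀ hf0 ?_
  rw [normForm, prod_comp]
  change (∏ j ∈ Finset.range n, (f j).comp (C w * X)) * f 0 = (∏ j ∈ Finset.range n, f j) * f 0
  simp only [hshift]
  rw [← Finset.prod_range_succ', Finset.prod_range_succ]
  simp only [f, hw, pow_zero]

theorem coeff_normForm_eq_zero [IsDomain R] (hw : IsPrimitiveRoot w n) {m : ℕ} (hm : ¬ n ∣ m) :
    (normForm w n g).coeff m = 0 := by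
  have h := congrArg (coeff · m) (normForm_comp_C_mul_X g hw.pow_eq_one)
  simp only [comp_C_mul_X_coeff] at h
  have hwm : w ^ m ≠ 1 := fun h ↦ hm (hw.dvd_of_pow_eq_one m h)
  exact (mul_right_eq_self₀.mp h).resolve_left hwm

end NormForm

theorem expand_contract_of_coeff_eq_zero {R : Type*} [CommRing R] {n : ℕ} (hn : n ≠ 0)
    {f : R[X]} (hf : ∀ m, ¬ n ∣ m → f.coeff m = 0) : expand R n (contract n f) = f := by
  ext m
  rw [coeff_expand (Nat.pos_of_ne_zero hn)]
  split_ifs with h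
  · rw [coeff_contract hn, Nat.div_mul_cancel h]
  · exact (hf m h).symm

section GaussNorm

variable {R F : Type*} [CommSemiring R] [FunLike F R ℝ] (v : F) {c : ℝ} (f : R[X])

theorem gaussNorm_le_of_forall_le {B : ℝ} (hB : 0 ≤ B) (h : ∀ i, v (f.coeff i) * c ^ i ≤ B) :
    f.gaussNorm v c ≤ B := by
  unfold gaussNorm
  split_ifs
  · exact Finset.sup'_le _ _ fun i _ ↦ h i
  · exact hB

theorem gaussNorm_lt_of_forall_lt {B : ℝ} (hB : 0 < B)
    (h : ∀ i ∈ f.support, v (f.coeff i) * c ^ i < B) : f.gaussNorm v c < B := by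
  unfold gaussNorm
  split_ifs
  · exact (Finset.sup'_lt_iff _).2 h
  · exact hB

theorem gaussNorm_erase_lt {i : ℕ} (hpos : 0 < f.gaussNorm v c)
    (h : ∀ j ∈ f.support, j ≠ i → v (f.coeff j) * c ^ j < f.gaussNorm v c) :
    (f.erase i).gaussNorm v c < f.gaussNorm v c := by
  refine gaussNorm_lt_of_forall_lt v _ hpos fun j hj ↦ ?_
  rw [support_erase, Finset.mem_erase] at hj
  rw [coeff_erase, if_neg hj.1]
  exact h j hj.2 hj.1

variable [ZeroHomClass F R ℝ] [NonnegHomClass F R ℝ]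

theorem gaussNorm_expand (hc : 0 ≤ c) {n : ℕ} (hn : 0 < n) :
    (expand R n f).gaussNorm v c = f.gaussNorm v (c ^ n) := by
  apply le_antisymm
  · refine gaussNorm_le_of_forall_le v _ (gaussNorm_nonneg _ _ (pow_nonneg hc n)) fun i ↦ ?_
    rw [coeff_expand hn]
    split_ifs with h
    · obtain ⟨m, rfl⟩ := h
      rw [Nat.mul_div_cancel_left m hn, pow_mul]
      exact le_gaussNorm v f (pow_nonneg hc n) m
    · simpa using gaussNorm_nonneg v f (pow_nonneg hc n)
  · refine gaussNorm_le_of_forall_le v _ (gaussNorm_nonneg _ _ hc) fun i ↦ ?_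
    have := le_gaussNorm v (expand R n f) hc (n * i)
    rwa [coeff_expand_mul' hn, pow_mul] at this

end GaussNorm

theorem gaussNorm_comp_C_mul_X {R : Type*} [CommRing R] [Nontrivial R] {v : AbsoluteValue R ℝ}
    {c : ℝ} (hc : 0 ≤ c) (f : R[X]) {u : R} (hu : v u = 1) :
    (f.comp (C u * X)).gaussNorm v c = f.gaussNorm v c := by
  have hcoeff : ∀ i, v ((f.comp (C u * X)).coeff i) = v (f.coeff i) := fun i ↦ by
    rw [comp_C_mul_X_coeff, map_mul, map_pow, hu, one_pow, mul_one]
  apply le_antisymm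
  · refine gaussNorm_le_of_forall_le v _ (gaussNorm_nonneg _ _ hc) fun i ↦ ?_
    rw [hcoeff]
    exact le_gaussNorm v f hc i
  · refine gaussNorm_le_of_forall_le v _ (gaussNorm_nonneg _ _ hc) fun i ↦ ?_
    rw [← hcoeff]
    exact le_gaussNorm v _ hc i

theorem norm_eval_le_gaussNorm {K : Type*} [NormedField K] [IsUltrametricDist K] (f : K[X])
    (x : K) : ‖f.eval x‖ ≤ f.gaussNorm (NormedField.toAbsoluteValue K) ‖x‖ := by
  rw [eval_eq_sum_range]
  refine IsUltrametricDist.norm_sum_le_of_forall_le_of_nonneg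
    (gaussNorm_nonneg _ _ (norm_nonneg x)) fun i _ ↦ ?_
  rw [norm_mul, norm_pow]
  exact le_gaussNorm (NormedField.toAbsoluteValue K) f (norm_nonneg x) i

theorem gaussNorm_normForm_sub_monomial_lt {K : Type*} [Field K] {v : AbsoluteValue K ℝ}
    (hna : IsNonarchimedean v) {c : ℝ} (hc : 0 < c) {p : ℕ} (hodd : Odd p) {w : K}
    (hw : w ^ p = 1) {g : K[X]} {i : ℕ} (hi : (g.erase i).gaussNorm v c < g.gaussNorm v c) :
    (normForm w p g - monomial (i * p) (g.coeff i ^ p)).gaussNorm v c < g.gaussNorm v c ^ p := by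
  have hvw : v w = 1 := (pow_eq_one_iff_of_nonneg (v.nonneg w) hodd.pos.ne').mp
    (by rw [← v.map_pow, hw, v.map_one])
  have := gaussNorm_isAbsoluteValue (c := c) hna hc
  let N : AbsoluteValue K[X] ℝ := IsAbsoluteValue.toAbsoluteValue (gaussNorm v c)
  have hNna : IsNonarchimedean N := isNonarchimedean_gaussNorm v hna hc.le
  have hsplit : normForm w p g = ∏ j ∈ Finset.range p,
      (monomial i (g.coeff i * (w ^ j) ^ i) + (g.erase i).comp (C (w ^ j) * X)) := by
    refine Finset.prod_congr rfl fun j _ ↦ ?_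
    conv_lhs => rw [← monomial_add_erase g i]
    rw [add_comp, monomial_comp, mul_pow, ← C_pow, ← mul_assoc, ← C_mul, C_mul_X_pow_eq_monomial]
  have hlead : ∏ j ∈ Finset.range p, monomial i (g.coeff i * (w ^ j) ^ i) =
      monomial (i * p) (g.coeff i ^ p) := by
    simp only [← C_mul_X_pow_eq_monomial, Finset.prod_mul_distrib, ← map_prod, Finset.prod_const,
      Finset.card_range, Finset.prod_pow]
    rw [prod_range_pow_eq_one_of_odd hodd hw, one_pow, mul_one, ← pow_mul]
  have := hNna.apply_prod_add_sub_prod_lt (s := Finset.range p) (M := g.gaussNorm v c)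
    (a := fun j ↦ monomial i (g.coeff i * (w ^ j) ^ i))
    (b := fun j ↦ (g.erase i).comp (C (w ^ j) * X))
    (fun j _ ↦ ?_) (fun j _ ↦ ?_)
  · rwa [Finset.card_range, hlead, ← hsplit] at this
  · change (monomial i _).gaussNorm v c ≤ _
    rw [gaussNorm_monomial, map_mul, v.map_pow, v.map_pow, hvw, one_pow, one_pow, mul_one]
    exact le_gaussNorm v g hc.le i
  · change ((g.erase i).comp _).gaussNorm v c < _
    rwa [gaussNorm_comp_C_mul_X hc.le _ (by rw [v.map_pow, hvw, one_pow])]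

end Polynomial

theorem algebraMap_norm_eq_aeval_normForm {F E : Type*} [Field F] [PerfectField F] [Field E]
    [Algebra F E] [IsAlgClosed E] {n : ℕ} {ζ : F} (hζ : IsPrimitiveRoot ζ n) {a : F}
    (hirr : Irreducible (X ^ n - C a)) {z : E} (hz : z ^ n = algebraMap F E a) (k : F⟮z⟯) :
    ∃ g : F[X], g.natDegree < n ∧
      algebraMap F E (Algebra.norm F k) = aeval z (normForm ζ n g) := by
  have hn : n ≠ 0 := by simpa using hirr.natDegree_pos.ne'
  have : NeZero n := ⟨hn⟩
  have hroot : aeval z (X ^ n - C a) = 0 := by simp [hz]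
  have hmonic : (X ^ n - C a).Monic := monic_X_pow_sub_C a hn
  have hmin : minpoly F z = X ^ n - C a :=
    (minpoly.eq_of_irreducible_of_monic hirr hroot hmonic).symm
  have hint : IsIntegral F z := ⟨_, hmonic, hroot⟩
  have := adjoin.finiteDimensional hint
  set pb := adjoin.powerBasis hint
  have hdim : pb.dim = n := by rw [adjoin.powerBasis_dim, hmin, natDegree_X_pow_sub_C]
  obtain ⟨g, hg, rfl⟩ := pb.exists_eq_aeval k
  refine ⟨g, hdim ▸ hg, ?_⟩
  rw [Algebra.norm_eq_prod_embeddings, aeval_normForm]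
  set ζ' := algebraMap F E ζ
  have hζ' : IsPrimitiveRoot ζ' n := hζ.map_of_injective (algebraMap F E).injective
  have hgen : minpoly F pb.gen = X ^ n - C a := by
    rw [adjoin.powerBasis_gen, minpoly_gen, hmin]
  have hconj : ∀ j, aeval (ζ' ^ j * z) (minpoly F pb.gen) = 0 := fun j ↦ by
    simp [hgen, mul_pow, ← pow_mul', hζ'.pow_eq_one, hz, pow_mul]
  -- `σ ↦ σ z` matches the embeddings of `F⟮z⟯` with the roots `ζ' ^ j * z` of `X ^ n - a`
  symm
  refine Finset.prod_bij (fun j _ ↦ pb.lift (ζ' ^ j * z) (hconj j)) (fun _ _ ↦ Finset.mem_univ _)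
    (fun i hi j hj hij ↦ ?_) (fun σ _ ↦ ?_) (fun j _ ↦ by rw [← aeval_algHom_apply, pb.lift_gen])
  · have hij' := congrArg (· pb.gen) hij
    simp only [pb.lift_gen] at hij'
    rcases eq_or_ne z 0 with rfl | hz0
    · have hn1 : n = 1 := by simpa [minpoly.zero] using (congrArg natDegree hmin).symm
      simp only [Finset.mem_range, hn1, Nat.lt_one_iff] at hi hj
      rw [hi, hj]
    · exact hζ'.pow_inj (Finset.mem_range.mp hi) (Finset.mem_range.mp hj)
        (mul_right_cancel₀ hz0 hij')
  · have hσ : σ pb.gen ∈ nthRoots n (algebraMap F E a) := by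
      have h := congrArg σ (minpoly.aeval F pb.gen)
      rw [← aeval_algHom_apply, hgen, map_zero] at h
      simpa [mem_nthRoots (Nat.pos_of_ne_zero hn), sub_eq_zero] using h
    rw [hζ'.nthRoots_eq hz] at hσ
    obtain ⟨j, hj, hjσ⟩ := Multiset.mem_map.mp hσ
    exact ⟨j, Finset.mem_range.mpr (Multiset.mem_range.mp hj), pb.algHom_ext (by simp [hjσ])⟩

theorem exists_eval_eq_norm_of_X_pow_sub_C {F E : Type*} [Field F] [PerfectField F] [Field E]
    [Algebra F E] [IsAlgClosed E] {n : ℕ} {ζ : F} (hζ : IsPrimitiveRoot ζ n) {a : F}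
    (hirr : Irreducible (X ^ n - C a)) {z : E} (hz : z ^ n = algebraMap F E a) (k : F⟮z⟯) :
    ∃ g R : F[X], g.natDegree < n ∧ expand F n R = normForm ζ n g ∧
      R.eval a = Algebra.norm F k := by
  obtain ⟨g, hg, hnorm⟩ := algebraMap_norm_eq_aeval_normForm hζ hirr hz k
  have hR := expand_contract_of_coeff_eq_zero (by simpa using hirr.natDegree_pos.ne')
    fun m hm ↦ coeff_normForm_eq_zero g hζ hm
  set R := contract n (normForm ζ n g)
  refine ⟨g, R, hg, hR, (algebraMap F E).injective ?_⟩
  rw [hnorm, ← hR, expand_aeval, hz, aeval_algebraMap_apply, coe_aeval_eq_eval]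

theorem IsPrimitiveRoot.exists_algHom_apply_eq {K L C : Type*} [Field K] [CommRing L] [IsDomain L]
    [Algebra K L] [CommRing C] [IsDomain C] [Algebra K C] {n : ℕ} [NeZero n]
    [IsCyclotomicExtension {n} K L] (hirr : Irreducible (cyclotomic n K)) {ζ : L}
    (hζ : IsPrimitiveRoot ζ n) {w : C} (hw : IsPrimitiveRoot w n) :
    ∃ φ : L →ₐ[K] C, φ ζ = w :=
  ⟨_, congrArg Subtype.val ((hζ.embeddingsEquivPrimitiveRoots C hirr).apply_symm_apply
    ⟨w, (mem_primitiveRoots (NeZero.pos n)).mpr hw⟩)⟩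

theorem Nat.exists_prime_dvd_sub_one_not_mul_self_dvd {p : ℕ} (hp : p.Prime) :
    ∃ q : ℕ, q.Prime ∧ p ∣ q - 1 ∧ ¬ p * p ∣ q - 1 := by
  have hp2 := hp.two_le
  have : NeZero (p * p) := ⟨by positivity⟩
  have hunit : IsUnit ((1 + p : ℕ) : ZMod (p * p)) := (ZMod.isUnit_iff_coprime _ _).mpr
    (Nat.Coprime.mul_right (by simp) (by simp))
  obtain ⟨q, -, hq, hqmod⟩ := Nat.forall_exists_prime_gt_and_eq_mod hunit 0
  rw [ZMod.natCast_eq_natCast_iff', Nat.mod_eq_of_lt (by nlinarith : 1 + p < p * p)] at hqmod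
  have hq1 : q - 1 = p * (p * (q / (p * p)) + 1) := by
    conv_lhs => rw [← Nat.div_add_mod q (p * p), hqmod]
    rw [show p * p * (q / (p * p)) + (1 + p) = p * (p * (q / (p * p)) + 1) + 1 by ring]
    simp
  refine ⟨q, hq, hq1 ▸ dvd_mul_right _ _, fun h ↦ ?_⟩
  rw [hq1, Nat.mul_dvd_mul_iff_left hp.pos, Nat.dvd_add_right (dvd_mul_right p _)] at h
  exact hp.one_lt.ne' (Nat.dvd_one.mp h)

theorem not_pow_eq_algebraMap_of_not_dvd_finrank {K : Type*} [Field K] [Algebra ℚ K]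
    {p q : ℕ} (hq : q.Prime) (hp : ¬ p ∣ Module.finrank ℚ K) (b : K) :
    b ^ p ≠ algebraMap ℚ K q := by
  intro hb
  have hval := congrArg (padicValRat q) (congrArg (Algebra.norm ℚ) hb)
  have := Fact.mk hq
  rw [map_pow, Algebra.norm_algebraMap, padicValRat.pow, padicValRat.pow,
    padicValRat.self hq.one_lt, mul_one] at hval
  exact hp (Int.natCast_dvd_natCast.mp ⟨_, hval.symm⟩)

theorem ZMod.exists_isPrimitiveRoot {q n : ℕ} [Fact q.Prime] (hn : n ∣ q - 1) :
    ∃ b : ZMod q, IsPrimitiveRoot b n := by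
  have hq : q.Prime := Fact.out
  obtain ⟨m, hm⟩ := hn
  obtain ⟨γ, hγ⟩ := IsCyclic.exists_ofOrder_eq_natCard (α := (ZMod q)ˣ)
  have hγ' : IsPrimitiveRoot (γ : ZMod q) (q - 1) := IsPrimitiveRoot.coe_units_iff.mpr
    (IsPrimitiveRoot.iff_orderOf.mpr (by rw [hγ, Nat.card_eq_fintype_card, ZMod.card_units]))
  exact ⟨_, hγ'.pow (by have := hq.two_le; omega) (hm.trans (mul_comm n m))⟩

namespace PadicInt

variable {q : ℕ} [Fact q.Prime]

theorem toZMod_eq_zero_iff (x : ℤ_[q]) : toZMod x = 0 ↔ ‖x‖ < 1 := by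
  rw [← RingHom.mem_ker, ker_toZMod, IsLocalRing.mem_maximalIdeal, mem_nonunits]

theorem isPrimitiveRoot_toZMod {p : ℕ} (hp : p.Prime) (hpq : p ≠ q)
    {W : ℤ_[q]} (hW : IsPrimitiveRoot W p) : IsPrimitiveRoot (toZMod W) p := by
  have hq : q.Prime := Fact.out
  have := Fact.mk hp
  refine IsPrimitiveRoot.iff_orderOf.mpr (orderOf_eq_prime (by rw [← map_pow, hW.pow_eq_one,
    map_one]) fun h1 ↦ hpq ?_)
  have hsum := congrArg toZMod (hW.geom_sum_eq_zero hp.one_lt)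
  simp only [map_sum, map_pow, h1, one_pow, Finset.sum_const, Finset.card_range, nsmul_eq_mul,
    mul_one, map_zero, ZMod.natCast_eq_zero_iff] at hsum
  exact ((Nat.prime_dvd_prime_iff_eq hq hp).mp hsum).symm

end PadicInt

namespace Padic

variable {p q : ℕ} [Fact q.Prime]

theorem exists_isPrimitiveRoot {n : ℕ} (hn : n ∣ q - 1) : ∃ w : ℚ_[q], IsPrimitiveRoot w n := by
  have hq : q.Prime := Fact.out
  obtain ⟨b, hb⟩ := ZMod.exists_isPrimitiveRoot hn
  have hn0 : n ≠ 0 := by rintro rfl; have := hq.two_le; omega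
  have hnq : (n : ZMod q) ≠ 0 := by
    rw [Ne, ZMod.natCast_eq_zero_iff]
    exact fun h ↦ by
      have := Nat.le_of_dvd (Nat.pos_of_ne_zero hn0) h
      have := Nat.le_of_dvd (by have := hq.two_le; omega) hn
      omega
  obtain ⟨b₀, rfl⟩ := ZMod.ringHom_surjective PadicInt.toZMod b
  set F : ℤ_[q][X] := X ^ n - 1
  have hderiv : ‖F.derivative.aeval b₀‖ = 1 := by
    refine (PadicInt.norm_le_one _).antisymm (not_lt.mp fun h ↦ ?_)
    rw [← PadicInt.toZMod_eq_zero_iff] at h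
    simp [F, derivative_X_pow, hnq, hb.ne_zero hn0] at h
  obtain ⟨ω, hω, hωb, -⟩ := hensels_lemma (F := F) (a := b₀) (by
    rw [hderiv, one_pow, ← PadicInt.toZMod_eq_zero_iff]
    simp [F, hb.pow_eq_one])
  rw [hderiv, ← PadicInt.toZMod_eq_zero_iff, map_sub, sub_eq_zero] at hωb
  simp only [F, map_sub, map_pow, aeval_X, map_one, sub_eq_zero] at hω
  have hω' : IsPrimitiveRoot ω n :=
    ⟨hω, fun l hl ↦ hb.dvd_of_pow_eq_one l (by rw [← hωb, ← map_pow, hl, map_one])⟩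
  exact ⟨ω, hω'.map_of_injective (f := PadicInt.Coe.ringHom) Subtype.val_injective⟩

theorem eq_of_norm_mul_pow_eq {c : ℝ} (hcp : c ^ p = (q : ℝ)⁻¹) {a b : ℚ_[q]} (ha : a ≠ 0)
    (hb : b ≠ 0) {i j : ℕ} (hi : i < p) (hj : j < p) (h : ‖a‖ * c ^ i = ‖b‖ * c ^ j) : i = j := by
  have hq : q.Prime := Fact.out
  have hq0 : (q : ℚ_[q]) ≠ 0 := by exact_mod_cast hq.ne_zero
  have hnorm : ∀ (x : ℚ_[q]) (k : ℕ), (‖x‖ * c ^ k) ^ p = ‖x ^ p * (q : ℚ_[q]) ^ k‖ := fun x k ↦ by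
    rw [mul_pow, ← pow_mul, mul_comm k p, pow_mul, hcp, norm_mul, norm_pow, norm_pow, norm_p]
  have h' : ‖a ^ p * (q : ℚ_[q]) ^ i‖ = ‖b ^ p * (q : ℚ_[q]) ^ j‖ := by rw [← hnorm, ← hnorm, h]
  rw [norm_eq_zpow_neg_valuation (by positivity), norm_eq_zpow_neg_valuation (by positivity)] at h'
  have hv := neg_injective (zpow_right_injective₀ (by exact_mod_cast hq.pos)
    (by exact_mod_cast hq.one_lt.ne') h')
  simp only [valuation_mul (pow_ne_zero _ ha) (pow_ne_zero _ hq0),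
    valuation_mul (pow_ne_zero _ hb) (pow_ne_zero _ hq0), valuation_pow, valuation_p,
    mul_one] at hv
  have hdvd : (p : ℤ) ∣ (i : ℤ) - j := ⟨b.valuation - a.valuation, by linarith⟩
  have := Int.eq_zero_of_abs_lt_dvd hdvd (abs_sub_lt_iff.2 ⟨by omega, by omega⟩)
  omega

theorem exists_gaussNorm_erase_lt {c : ℝ} (hc : 0 < c) (hcp : c ^ p = (q : ℝ)⁻¹)
    {g : ℚ_[q][X]} (hg0 : g ≠ 0) (hg : g.natDegree < p) :
    ∃ i < p, g.coeff i ≠ 0 ∧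
      g.gaussNorm (NormedField.toAbsoluteValue ℚ_[q]) c = ‖g.coeff i‖ * c ^ i ∧
      (g.erase i).gaussNorm (NormedField.toAbsoluteValue ℚ_[q]) c <
        g.gaussNorm (NormedField.toAbsoluteValue ℚ_[q]) c := by
  set v := NormedField.toAbsoluteValue ℚ_[q]
  obtain ⟨i, hi⟩ := exists_eq_gaussNorm v c g
  have hgi : g.coeff i ≠ 0 := by
    intro h0
    rw [h0, map_zero, zero_mul, gaussNorm_eq_zero_iff v _ (fun x hx ↦ norm_eq_zero.mp hx) hc] at hi
    exact hg0 hi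
  have hM : 0 < g.gaussNorm v c := by rw [hi]; exact mul_pos (norm_pos_iff.mpr hgi) (pow_pos hc i)
  have hip : i < p := (le_natDegree_of_ne_zero hgi).trans_lt hg
  refine ⟨i, hip, hgi, hi, gaussNorm_erase_lt v g hM fun j hj hji ↦ ?_⟩
  refine (le_gaussNorm v g hc.le j).lt_of_ne fun h ↦ hji ?_
  exact eq_of_norm_mul_pow_eq hcp (mem_support_iff.mp hj) hgi
    ((le_natDegree_of_mem_supp j hj).trans_lt hg) hip (h.trans hi)

theorem exists_norm_sub_pow_lt_one (hodd : Odd p) {w : ℚ_[q]}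
    (hw : w ^ p = 1) {g R : ℚ_[q][X]} (hg : g.natDegree < p)
    (hR : expand ℚ_[q] p R = normForm w p g) (hRw : R.eval (q : ℚ_[q]) = w) :
    ∃ a : ℚ_[q], ‖w - a ^ p‖ < 1 := by
  have hp0 : 0 < p := hodd.pos
  set v := NormedField.toAbsoluteValue ℚ_[q]
  obtain ⟨c, hc0, hcp⟩ : ∃ c : ℝ, 0 < c ∧ c ^ p = (q : ℝ)⁻¹ :=
    ⟨(q : ℝ)⁻¹ ^ (p⁻¹ : ℝ), Real.rpow_pos_of_pos (by simpa using (Fact.out : q.Prime).pos) _,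
      Real.rpow_inv_natCast_pow (by positivity) hp0.ne'⟩
  -- `c = ‖q ^ (1 / p)‖` is the weight of `X` in `normForm w p g = R (X ^ p)`
  have hwnorm : ‖w‖ = 1 := (pow_eq_one_iff_of_nonneg (norm_nonneg w) hp0.ne').mp
    (by rw [← norm_pow, hw, norm_one])
  have hg0 : g ≠ 0 := by
    rintro rfl
    have hR0 : R = 0 := expand_injective hp0 <| by
      rw [hR, map_zero, normForm, Finset.prod_eq_zero (Finset.mem_range.2 hp0) (zero_comp)]
    simp [hR0, ← hRw] at hwnorm
  obtain ⟨i, hip, hgi, hi, herase⟩ := exists_gaussNorm_erase_lt hc0 hcp hg0 hg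
  have hM : 0 < g.gaussNorm v c := by rw [hi]; exact mul_pos (norm_pos_iff.mpr hgi) (pow_pos hc0 i)
  have hlt := gaussNorm_normForm_sub_monomial_lt IsUltrametricDist.isNonarchimedean_norm hc0 hodd
    hw herase
  rw [← hR, ← expand_monomial, ← map_sub, gaussNorm_expand _ _ hc0.le hp0, hcp, ← norm_p] at hlt
  have hlt' : ‖w - g.coeff i ^ p * (q : ℚ_[q]) ^ i‖ < g.gaussNorm v c ^ p :=
    calc ‖w - g.coeff i ^ p * (q : ℚ_[q]) ^ i‖
        = ‖(R - monomial i (g.coeff i ^ p)).eval (q : ℚ_[q])‖ := by simp [hRw]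
      _ ≤ _ := norm_eval_le_gaussNorm _ _
      _ < _ := hlt
  have hMp : ‖g.coeff i ^ p * (q : ℚ_[q]) ^ i‖ = g.gaussNorm v c ^ p := by
    rw [hi, mul_pow, norm_mul, norm_pow, norm_pow, norm_p, ← hcp, ← pow_mul, ← pow_mul]
    ring
  have hM1 : g.gaussNorm v c = 1 := by
    have := norm_eq_of_norm_sub_lt_right (hMp ▸ hlt')
    rw [hwnorm, hMp] at this
    exact (pow_eq_one_iff_of_nonneg hM.le hp0.ne').mp this.symm
  obtain rfl : i = 0 := eq_of_norm_mul_pow_eq hcp hgi one_ne_zero hip hp0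
    (by rw [norm_one, pow_zero, mul_one, ← hM1, hi])
  exact ⟨g.coeff 0, by simpa [hMp, hM1] using hlt'⟩

theorem one_le_norm_sub_pow (hp : p.Prime) (hpq : p ≠ q)
    (hq : ¬ p * p ∣ q - 1) {w : ℚ_[q]} (hw : IsPrimitiveRoot w p) (a : ℚ_[q]) :
    1 ≤ ‖w - a ^ p‖ := by
  by_contra! h
  have hwnorm : ‖w‖ = 1 := (pow_eq_one_iff_of_nonneg (norm_nonneg w) hp.ne_zero).mp
    (by rw [← norm_pow, hw.pow_eq_one, norm_one])
  have ha : ‖a‖ = 1 := (pow_eq_one_iff_of_nonneg (norm_nonneg a) hp.ne_zero).mp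
    (by rw [← norm_pow, ← norm_eq_of_norm_sub_lt_left (hwnorm ▸ h), hwnorm])
  set W : ℤ_[q] := ⟨w, hwnorm.le⟩
  set A : ℤ_[q] := ⟨a, ha.le⟩
  have hW : IsPrimitiveRoot W p := hw.of_map_of_injective (f := PadicInt.Coe.ringHom)
    Subtype.val_injective
  have hWA : PadicInt.toZMod W = PadicInt.toZMod A ^ p := by
    rw [← map_pow, ← sub_eq_zero, ← map_sub, PadicInt.toZMod_eq_zero_iff]
    exact h
  have hord : orderOf (PadicInt.toZMod A ^ p) = p :=
    (hWA ▸ PadicInt.isPrimitiveRoot_toZMod hp hpq hW).eq_orderOf.symm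
  have hA0 : PadicInt.toZMod A ≠ 0 := fun h0 ↦
    hp.ne_zero (by simpa [h0, zero_pow hp.ne_zero] using hord.symm)
  exact hq (orderOf_eq_mul_self_of_orderOf_pow_eq hp hord ▸ ZMod.orderOf_dvd_card_sub_one hA0)

theorem eval_ne_of_expand_eq_normForm (hp : p.Prime) (hodd : Odd p) (hpq : p ≠ q)
    (hq : ¬ p * p ∣ q - 1) {w : ℚ_[q]} (hw : IsPrimitiveRoot w p) {g R : ℚ_[q][X]}
    (hg : g.natDegree < p) (hR : expand ℚ_[q] p R = normForm w p g) :
    R.eval (q : ℚ_[q]) ≠ w := fun hRw ↦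
  let ⟨a, ha⟩ := exists_norm_sub_pow_lt_one hodd hw.pow_eq_one hg hR hRw
  not_lt_of_ge (one_le_norm_sub_pow hp hpq hq hw a) ha

end Padic

/-- Let `p` be an odd prime, `ζ` a primitive `p`-th root of unity and `F = ℚ(ζ)`.  Then
there exists `lam ∈ ℚˣ` such that `ζ` is not in the image of the norm map of the extension
`F(lam^{1/p})/F`. -/
theorem stmt_11 (p : ℕ+) (hp : (p : ℕ).Prime) (hodd : Odd (p : ℕ))
    (F : Type*) [Field F] [Algebra ℚ F] [IsCyclotomicExtension {(p : ℕ)} ℚ F]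
    (ζ : F) (hζ : IsPrimitiveRoot ζ p) :
    ∃ lam : ℚ, lam ≠ 0 ∧ ∀ z : AlgebraicClosure F,
      z ^ (p : ℕ) = algebraMap F (AlgebraicClosure F) (algebraMap ℚ F lam) →
      ¬ ∃ k : F⟮z⟯, Algebra.norm F k = ζ := by
  have hp1 : ¬ (p : ℕ) ∣ p - 1 := Nat.not_dvd_of_pos_of_lt (by have := hp.two_le; omega)
    (by have := hp.two_le; omega)
  obtain ⟨q, hq, hpq, hpq2⟩ := Nat.exists_prime_dvd_sub_one_not_mul_self_dvd hp
  have := Fact.mk hq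
  refine ⟨q, by exact_mod_cast hq.ne_zero, fun z hz ⟨k, hk⟩ ↦ ?_⟩
  have : CharZero F := charZero_of_injective_algebraMap (algebraMap ℚ F).injective
  have hcyc := cyclotomic.irreducible_rat p.pos
  have hirr : Irreducible (X ^ (p : ℕ) - C (algebraMap ℚ F q)) :=
    X_pow_sub_C_irreducible_of_prime hp (not_pow_eq_algebraMap_of_not_dvd_finrank hq
      (by rwa [IsCyclotomicExtension.finrank F hcyc, Nat.totient_prime hp]))
  obtain ⟨g, R, hg, hR, hRk⟩ := exists_eval_eq_norm_of_X_pow_sub_C hζ hirr hz k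
  obtain ⟨w, hw⟩ := Padic.exists_isPrimitiveRoot hpq
  obtain ⟨φ, hφ⟩ := hζ.exists_algHom_apply_eq hcyc hw
  refine Padic.eval_ne_of_expand_eq_normForm hp hodd (fun h ↦ hp1 (by rwa [← h] at hpq)) hpq2 hw
    (g := g.map (φ : F →+* ℚ_[q])) (R := R.map (φ : F →+* ℚ_[q])) (natDegree_map_le.trans_lt hg)
    (by rw [← map_expand, hR, map_normForm, RingHom.coe_coe, hφ]) ?_
  rw [eval_natCast_map, ← map_natCast (algebraMap ℚ F), hRk, hk, RingHom.coe_coe, hφ]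
end

section
/- Let G be a finite group, F a field whose characteristic does not divide |G|, and let α ∈ Z^2(G, F^*). Then the twisted group algebra F^α G admits a commutative Wedderburn component if and only if the class [α] lies in the image of the inflation map from Ext(G/G', F^*) to H^2(G, F^*). -/
/-!
Put `v g = e * u g` for a central idempotent `e`. If the corner `e * A` is commutative, the `v g`
are nonzero, commute, and multiply projectively with cocycle `α`; so the line `Fˣ • v g` depends
only on the class of `g` in `G/G'`. Writing `v g = μ g • v (s ḡ)` for a section `s` of `G → G/G'`
exhibits `α` as the inflation of a symmetric cocycle times the coboundary of `μ`.

Conversely, rescaling the basis turns `α` into the inflation of a normalized symmetric cocycle, so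
that `k ↦ u k` is an honest representation of `G'`. Its averaging idempotent
`e = |G'|⁻¹ • ∑_{k ∈ G'} u k` is central, and `e * u k = e` for `k ∈ G'`; since
`u (h * g) = u ⁅h, g⁆ * u (g * h)`, the corner `e * A` is commutative.
-/

/-- A (trivial-action) multiplicative 2-cocycle. -/
def IsTwoCocycle' {G M : Type*} [Group G] [CommMonoid M] (α : G → G → M) : Prop :=
  ∀ g h k : G, α g h * α (g * h) k = α h k * α g (h * k)

/-- `[α]` lies in the image of `inf : Ext(G/G', M) → H²(G, M)`. -/
def IsInflatedFromExt {G M : Type*} [Group G] [CommGroup M] (α : G → G → M) : Prop :=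
  ∃ β : Abelianization G → Abelianization G → M, IsTwoCocycle' β ∧ (∀ x y, β x y = β y x) ∧
    ∃ μ : G → M, ∀ g h : G,
      α g h = β (Abelianization.of g) (Abelianization.of h) * (μ g * μ h * (μ (g * h))⁻¹)

/-- In a semisimple algebra the corner `e * A` of a central idempotent `e ≠ 0` is a product of
Wedderburn components, so this says that one of them is commutative. -/
def HasCommutativeCentralCorner (F A : Type*) [Field F] [Ring A] [Algebra F A] : Prop :=
  ∃ e : A, e ≠ 0 ∧ IsIdempotentElem e ∧ e ∈ Subalgebra.center F A ∧
    ∀ x y : A, (e * x) * (e * y) = (e * y) * (e * x)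

theorem IsTwoCocycle'.one_left {G M : Type*} [Group G] [CommGroup M] {α : G → G → M}
    (hα : IsTwoCocycle' α) (g : G) : α 1 g = α 1 1 := by
  simpa using (hα 1 1 g).symm

theorem IsTwoCocycle'.one_right {G M : Type*} [Group G] [CommGroup M] {α : G → G → M}
    (hα : IsTwoCocycle' α) (g : G) : α g 1 = α 1 1 := by
  simpa using hα g 1 1

section Basis

variable {ι R A : Type*} [CommSemiring R] [Semiring A] [Algebra R A] (b : Module.Basis ι R A)

theorem Module.Basis.eq_of_forall_mul_eq {x y : A} (h : ∀ i, x * b i = y * b i) : x = y := by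
  simpa using LinearMap.congr_fun (b.ext (f₁ := LinearMap.mulLeft R x)
    (f₂ := LinearMap.mulLeft R y) h) 1

theorem Module.Basis.mem_center_of_forall_mul_comm {x : A} (h : ∀ i, b i * x = x * b i) :
    x ∈ Subalgebra.center R A := by
  refine Subalgebra.mem_center_iff.mpr fun a => ?_
  simpa using LinearMap.congr_fun (b.ext (f₁ := LinearMap.mulRight R x)
    (f₂ := LinearMap.mulLeft R x) h) a

theorem Module.Basis.mul_left_mul_comm {e : A} (h : ∀ i j, e * (b i * b j) = e * (b j * b i))
    (x y : A) : e * (x * y) = e * (y * x) := by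
  have key : (LinearMap.mul R A).compr₂ (LinearMap.mulLeft R e) =
      (LinearMap.mul R A).flip.compr₂ (LinearMap.mulLeft R e) :=
    LinearMap.ext_basis b b fun i j => by simpa using h i j
  simpa using LinearMap.congr_fun (LinearMap.congr_fun key x) y

end Basis

theorem IsIdempotentElem.mul_mul_mul_of_mul_comm {A : Type*} [Semiring A] {e : A}
    (he : IsIdempotentElem e) (hc : ∀ a, a * e = e * a) (x y : A) :
    (e * x) * (e * y) = e * (x * y) := by
  rw [mul_assoc, ← mul_assoc x, hc x, mul_assoc, ← mul_assoc, he.eq]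

theorem units_smul_left_injective {F A : Type*} [Field F] [AddCommGroup A] [Module F A]
    {x : A} (hx : x ≠ 0) : Function.Injective fun c : Fˣ => c • x := fun c d h =>
  Units.val_injective (smul_left_injective F hx (by simpa only [Units.smul_def] using h))

def proportionalCon {G F A : Type*} [Group G] [Field F] [Ring A] [Algebra F A]
    {α : G → G → Fˣ} (v : G → A) (hv : ∀ g h, v g * v h = α g h • v (g * h)) : Con G where
  toSetoid := (MulAction.orbitRel Fˣ A).comap v
  mul' := by
    rintro g g' h h' ⟨c, hc⟩ ⟨d, hd⟩
    refine ⟨(α g h)⁻¹ * (c * d * α g' h'), ?_⟩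
    dsimp only at hc hd ⊢
    rw [← smul_left_cancel_iff (α g h), ← hv, ← hc, ← hd, smul_mul_smul_comm, hv, smul_smul,
      smul_smul, mul_inv_cancel_left]

section Forward

variable {G F A : Type*} [Group G] [Field F] [Ring A] [Algebra F A]
  {α : G → G → Fˣ} {v : G → A} (hv : ∀ g h, v g * v h = α g h • v (g * h))
include hv

theorem isTwoCocycle_of_mul_eq_smul (hv0 : ∀ g, v g ≠ 0) : IsTwoCocycle' α := by
  intro x y z
  apply units_smul_left_injective (hv0 (x * y * z))
  have h := mul_assoc (v x) (v y) (v z)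
  rwa [hv x y, smul_mul_assoc, hv, hv y z, mul_smul_comm, hv, smul_smul, smul_smul,
    ← mul_assoc] at h

theorem ne_zero_of_mul_eq_smul {g : G} (hg : v g ≠ 0) (g' : G) : v g' ≠ 0 := by
  have h := hv g' (g'⁻¹ * g)
  rw [mul_inv_cancel_left] at h
  exact left_ne_zero_of_mul (h ▸ (smul_ne_zero_iff_ne _).mpr hg)

theorem exists_smul_eq_of_abelianization_eq (hcomm : ∀ g h, v g * v h = v h * v g) {g h : G}
    (hgh : Abelianization.of g = Abelianization.of h) : ∃ c : Fˣ, c • v h = v g := by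
  set c := proportionalCon v hv
  have hle : commutator G ≤ c.mk'.ker := by
    rw [commutator_def, Subgroup.commutator_le]
    intro a _ b _
    rw [MonoidHom.mem_ker, map_commutatorElement, commutatorElement_eq_one_iff_mul_comm,
      ← map_mul, ← map_mul]
    refine c.eq.mpr ⟨(α a b)⁻¹ * α b a, ?_⟩
    dsimp only
    rw [mul_smul, ← hv, ← hcomm, hv, inv_smul_smul]
  rw [MonoidHom.eq_iff, Abelianization.ker_of] at hgh
  exact c.eq.mp ((MonoidHom.eq_iff _).mpr (hle hgh))

theorem isInflatedFromExt_of_mul_comm (hcomm : ∀ g h, v g * v h = v h * v g)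
    (hv0 : ∀ g, v g ≠ 0) : IsInflatedFromExt α := by
  obtain ⟨s, hs⟩ : ∃ s : Abelianization G → G, ∀ x, Abelianization.of (s x) = x :=
    QuotientGroup.mk_surjective.hasRightInverse
  choose t ht using fun g =>
    exists_smul_eq_of_abelianization_eq hv hcomm (hs (Abelianization.of g)).symm
  set β : Abelianization G → Abelianization G → Fˣ := fun x y => α (s x) (s y) * t (s x * s y)
  have hβ : ∀ x y, v (s x) * v (s y) = β x y • v (s (x * y)) := by
    intro x y
    rw [hv, ← ht, mul_smul, map_mul, hs, hs]
  have cancel := fun x => units_smul_left_injective (F := F) (hv0 (s x))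
  refine ⟨β, isTwoCocycle_of_mul_eq_smul hβ fun x => hv0 (s x), fun x y => ?_, t, fun g h => ?_⟩
  · apply cancel (x * y)
    dsimp only
    rw [← hβ, hcomm, hβ, mul_comm y x]
  · have h1 := hv g h
    rw [← ht g, ← ht h, ← ht (g * h), smul_mul_smul_comm, hβ, smul_smul, smul_smul, map_mul] at h1
    rw [← mul_assoc, eq_mul_inv_iff_mul_eq, ← cancel _ h1, mul_comm]

end Forward

theorem isInflatedFromExt_of_hasCommutativeCentralCorner {G F A : Type*} [Group G] [Field F]
    [Ring A] [Algebra F A] {α : G → G → Fˣ} {u : Module.Basis G F A}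
    (hu : ∀ g h, u g * u h = α g h • u (g * h)) (hA : HasCommutativeCentralCorner F A) :
    IsInflatedFromExt α := by
  obtain ⟨e, he0, hee, hec, hcomm⟩ := hA
  have hv : ∀ g h, e * u g * (e * u h) = α g h • (e * u (g * h)) := fun g h => by
    rw [hee.mul_mul_mul_of_mul_comm (Subalgebra.mem_center_iff.mp hec), hu, mul_smul_comm]
  obtain ⟨g, hg⟩ : ∃ g, e * u g ≠ 0 := by
    by_contra! h
    exact he0 (u.eq_of_forall_mul_eq fun g => by rw [h, zero_mul])
  exact isInflatedFromExt_of_mul_comm hv (fun g h => hcomm _ _) (ne_zero_of_mul_eq_smul hv hg)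

section Averaging

variable (F : Type*) {H A : Type*} [Field F] [Ring A] [Algebra F A] [Group H] [Fintype H]
  (ρ : H →* A)

noncomputable def averagingElement : A := (Nat.card H : F)⁻¹ • ∑ k, ρ k

theorem apply_mul_averagingElement (k : H) :
    ρ k * averagingElement F ρ = averagingElement F ρ := by
  rw [averagingElement, mul_smul_comm, Finset.mul_sum]
  simp_rw [← map_mul]
  exact congrArg _ (Fintype.sum_equiv (Equiv.mulLeft k) _ _ fun _ => rfl)

theorem averagingElement_mul_apply (k : H) :
    averagingElement F ρ * ρ k = averagingElement F ρ := by
  rw [averagingElement, smul_mul_assoc, Finset.sum_mul]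
  simp_rw [← map_mul]
  exact congrArg _ (Fintype.sum_equiv (Equiv.mulRight k) _ _ fun _ => rfl)

theorem isIdempotentElem_averagingElement (hH : (Nat.card H : F) ≠ 0) :
    IsIdempotentElem (averagingElement F ρ) := by
  unfold IsIdempotentElem
  nth_rw 1 [averagingElement]
  rw [smul_mul_assoc, Finset.sum_mul]
  simp_rw [apply_mul_averagingElement]
  rw [Finset.sum_const, Finset.card_univ, ← Nat.card_eq_fintype_card, ← Nat.cast_smul_eq_nsmul F,
    smul_smul, inv_mul_cancel₀ hH, one_smul]

end Averaging

theorem Subgroup.natCast_card_ne_zero {G R : Type*} [Group G] [Fintype G] [Semiring R]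
    (hG : (Fintype.card G : R) ≠ 0) (H : Subgroup G) : (Nat.card H : R) ≠ 0 := by
  obtain ⟨m, hm⟩ := H.card_subgroup_dvd_card
  rw [← Nat.card_eq_fintype_card, hm, Nat.cast_mul] at hG
  exact left_ne_zero_of_mul hG

theorem Subgroup.Normal.sum_mul_left_eq_sum_mul_right {G M : Type*} [Group G] [AddCommMonoid M]
    {H : Subgroup G} [H.Normal] [Fintype H] (f : G → M) (g : G) :
    ∑ k : H, f (g * k) = ∑ k : H, f (k * g) :=
  Fintype.sum_equiv (MulAut.conjNormal g).toEquiv _ _ fun k => by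
    simp [MulAut.conjNormal_apply]

theorem Module.Basis.unitsSMul_mul_eq_smul {G F A : Type*} [Group G] [Field F] [Ring A]
    [Algebra F A] {α γ : G → G → Fˣ} {μ : G → Fˣ} {u : Module.Basis G F A}
    (hu : ∀ g h, u g * u h = α g h • u (g * h))
    (hα : ∀ g h, α g h = γ g h * (μ g * μ h * (μ (g * h))⁻¹)) (g h : G) :
    u.unitsSMul (fun g => (μ g)⁻¹) g * u.unitsSMul (fun g => (μ g)⁻¹) h =
      γ g h • u.unitsSMul (fun g => (μ g)⁻¹) (g * h) := by
  simp only [Module.Basis.unitsSMul_apply]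
  rw [smul_mul_smul_comm, hu, hα, smul_smul, smul_smul]
  congr 1
  ext
  push_cast
  field_simp

theorem Abelianization.of_eq_one_of_mem {G : Type*} [Group G] {k : G} (hk : k ∈ commutator G) :
    Abelianization.of k = 1 := by
  rwa [← MonoidHom.mem_ker, Abelianization.ker_of]

section Reverse

variable {G F A : Type*} [Group G] [Field F] [Ring A] [Algebra F A]
  {γ : Abelianization G → Abelianization G → Fˣ} {w : Module.Basis G F A}
  (hw : ∀ g h, w g * w h = γ (Abelianization.of g) (Abelianization.of h) • w (g * h))
  (hγl : ∀ x, γ 1 x = 1)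
include hw hγl

theorem mul_eq_of_mem_commutator_left {k : G} (hk : k ∈ commutator G) (g : G) :
    w k * w g = w (k * g) := by
  rw [hw, Abelianization.of_eq_one_of_mem hk, hγl, one_smul]

noncomputable def commutatorRestriction : commutator G →* A where
  toFun k := w k
  map_one' := w.eq_of_forall_mul_eq fun g => by
    rw [Subgroup.coe_one, mul_eq_of_mem_commutator_left hw hγl (one_mem _), one_mul, one_mul]
  map_mul' k l := (mul_eq_of_mem_commutator_left hw hγl k.2 l).symm

theorem hasCommutativeCentralCorner_of_normalized [Fintype G] (hchar : (Fintype.card G : F) ≠ 0)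
    (hγr : ∀ x, γ x 1 = 1) (hγs : ∀ x y, γ x y = γ y x) : HasCommutativeCentralCorner F A := by
  classical
  set ρ := commutatorRestriction hw hγl
  set e := averagingElement F ρ
  have he_w : ∀ k ∈ commutator G, e * w k = e := fun k hk =>
    averagingElement_mul_apply F ρ ⟨k, hk⟩
  have hcen : e ∈ Subalgebra.center F A := by
    refine w.mem_center_of_forall_mul_comm fun g => ?_
    have hr : ∀ k ∈ commutator G, w g * w k = w (g * k) := fun k hk => by
      rw [hw, Abelianization.of_eq_one_of_mem hk, hγr, one_smul]
    simp only [e, averagingElement, mul_smul_comm, smul_mul_assoc, Finset.mul_sum, Finset.sum_mul]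
    congr 1
    simp only [ρ, commutatorRestriction, MonoidHom.coe_mk, OneHom.coe_mk,
      mul_eq_of_mem_commutator_left hw hγl (SetLike.coe_mem _), hr _ (SetLike.coe_mem _)]
    exact Subgroup.Normal.sum_mul_left_eq_sum_mul_right (fun x => w x) g
  have he0 : e ≠ 0 := by
    refine smul_ne_zero (inv_ne_zero ((commutator G).natCast_card_ne_zero hchar)) fun h => ?_
    have hli := Fintype.linearIndependent_iff.mp
      (w.linearIndependent.comp ((↑) : commutator G → G) Subtype.val_injective) (fun _ => 1)
    exact one_ne_zero (hli (by simpa [ρ, commutatorRestriction] using h) 1)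
  have hswap : ∀ g h, e * (w g * w h) = e * (w h * w g) := by
    intro g h
    have hk : h * g * (g * h)⁻¹ ∈ commutator G := by
      rw [mul_inv_rev, ← mul_assoc, ← commutatorElement_def, commutator_def]
      exact Subgroup.commutator_mem_commutator (Subgroup.mem_top h) (Subgroup.mem_top g)
    rw [hw, hw, hγs, mul_smul_comm, mul_smul_comm]
    congr 1
    calc e * w (g * h) = e * w (h * g * (g * h)⁻¹) * w (g * h) := by rw [he_w _ hk]
      _ = e * w (h * g) := by
        rw [mul_assoc, mul_eq_of_mem_commutator_left hw hγl hk, inv_mul_cancel_right]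
  have hc := Subalgebra.mem_center_iff.mp hcen
  have hee := isIdempotentElem_averagingElement F ρ ((commutator G).natCast_card_ne_zero hchar)
  refine ⟨e, he0, hee, hcen, fun x y => ?_⟩
  rw [hee.mul_mul_mul_of_mul_comm hc, hee.mul_mul_mul_of_mul_comm hc, w.mul_left_mul_comm hswap]

end Reverse

theorem hasCommutativeCentralCorner_of_isInflatedFromExt {G F A : Type*} [Group G] [Fintype G]
    [Field F] [Ring A] [Algebra F A] (hchar : (Fintype.card G : F) ≠ 0) {α : G → G → Fˣ}
    {u : Module.Basis G F A} (hu : ∀ g h, u g * u h = α g h • u (g * h))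
    (hα : IsInflatedFromExt α) : HasCommutativeCentralCorner F A := by
  obtain ⟨β, hβ, hβs, μ, hrel⟩ := hα
  -- dividing by `β 1 1` normalizes `β`, and the twist by `μ` absorbs the coboundary
  refine hasCommutativeCentralCorner_of_normalized (γ := fun x y => (β 1 1)⁻¹ * β x y)
    (w := u.unitsSMul fun g => (β 1 1 * μ g)⁻¹) (u.unitsSMul_mul_eq_smul hu fun g h => ?_)
    (fun x => by simp [hβ.one_left]) hchar (fun x => by simp [hβ.one_right])
    (fun x y => by rw [hβs x y])
  rw [hrel]
  ext
  push_cast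
  field_simp

theorem stmt_13_general (G : Type*) [Group G] [Fintype G] (F : Type*) [Field F]
    (hchar : (Fintype.card G : F) ≠ 0)
    (α : G → G → Fˣ)
    (A : Type*) [Ring A] [Algebra F A] (u : Module.Basis G F A)
    (hu : ∀ x y : G, u x * u y = (α x y : F) • u (x * y)) :
    (∃ e : A, e ≠ 0 ∧ IsIdempotentElem e ∧ e ∈ Subalgebra.center F A ∧
        ∀ x y : A, (e * x) * (e * y) = (e * y) * (e * x)) ↔
      (∃ β : Abelianization G → Abelianization G → Fˣ, IsTwoCocycle' β ∧
        (∀ x y, β x y = β y x) ∧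
        ∃ μ : G → Fˣ, ∀ g h : G,
          α g h = β (Abelianization.of g) (Abelianization.of h) *
            (μ g * μ h * (μ (g * h))⁻¹)) := by
  have hu' : ∀ g h, u g * u h = α g h • u (g * h) := by simpa only [Units.smul_def] using hu
  exact ⟨isInflatedFromExt_of_hasCommutativeCentralCorner hu',
    hasCommutativeCentralCorner_of_isInflatedFromExt hchar hu'⟩

/-- Let `G` be a finite group, `F` a field whose characteristic does not divide `|G|`, and
`α` a 2-cocycle on `G` with values in `Fˣ`.  The twisted group algebra `F^α G` admits a
commutative Wedderburn component (equivalently: there is a nonzero central idempotent whose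
corner is commutative) if and only if `[α]` lies in the image of the inflation map from
`Ext(G/G', Fˣ)`, i.e. `α` is cohomologous to a cocycle inflated from a symmetric cocycle on
the abelianization of `G`. -/
theorem stmt_13 (G : Type*) [Group G] [Fintype G] (F : Type*) [Field F]
    (hchar : (Fintype.card G : F) ≠ 0)
    (α : G → G → Fˣ) (hα : IsTwoCocycle' α)
    (A : Type*) [Ring A] [Algebra F A] (u : Module.Basis G F A)
    (hu : ∀ x y : G, u x * u y = (α x y : F) • u (x * y)) :
    (∃ e : A, e ≠ 0 ∧ IsIdempotentElem e ∧ e ∈ Subalgebra.center F A ∧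
        ∀ x y : A, (e * x) * (e * y) = (e * y) * (e * x)) ↔
      (∃ β : Abelianization G → Abelianization G → Fˣ, IsTwoCocycle' β ∧
        (∀ x y, β x y = β y x) ∧
        ∃ μ : G → Fˣ, ∀ g h : G,
          α g h = β (Abelianization.of g) (Abelianization.of h) *
            (μ g * μ h * (μ (g * h))⁻¹)) :=
  stmt_13_general G F hchar α A u hu
end

section
/- Let 1 → A → S → G → 1 be a central extension of finite groups, F a field whose characteristic does not divide |A|, and α ∈ Z^2(S, F^*) inflated from α' ∈ Z^2(G, F^*). Fix a 2-cocycle σ ∈ Z^2(G, A) corresponding to the extension. Then F^α S ≅ ⊕_{χ ∈ Irr(A,F)} F(χ)^{α_χ} G as F-algebras, where for a character χ : A → K^* (K a splitting field of A over F), α_χ(g,h) = α'(g,h)·χ(σ(g,h)) and F(χ) is the field generated over F by the values of χ. -/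
open IntermediateField

/-- The `F`-algebra homomorphism `F[A] → K` induced by a character `χ : A → Kˣ`. -/
noncomputable def liftChar (F : Type*) [Field F] (A : Type*) [CommGroup A]
    (K : Type*) [Field K] [Algebra F K] (χ : A →* Kˣ) :
    MonoidAlgebra F A →ₐ[F] K :=
  MonoidAlgebra.lift F K A ((Units.coeHom K).comp χ)

/-!
Since the characteristic of `F` does not divide `|A|`, `F[A]` is semisimple, so it is the
product of its residue fields.  Each residue field is generated over `F` by `exp(A)`-th roots of
unity and therefore embeds in `K`; hence the maximal ideals of `F[A]` are exactly the kernels of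
the characters in `Irr(A, F)`, and the Chinese remainder theorem gives `F[A] ≅ ∏_χ F(χ)`.
Writing every element of `S` uniquely as `ι a * s g`, the basis of `F^α S` is indexed by
`G × A` with `u (g, a) * u (h, b) = α' g h • u (g * h, a * b * σ g h)`.  The `F`-linear
isomorphism `u (g, a) ↦ (χ a • v_χ g)_χ`, which is the previous isomorphism applied
coordinatewise in `g`, is multiplicative precisely because `α_χ = α' · (χ ∘ σ)`.
-/

open Module MonoidAlgebra Polynomial

theorem MonoidAlgebra.range_lift {R M B : Type*} [CommSemiring R] [Monoid M] [Semiring B]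
    [Algebra R B] (f : M →* B) : (lift R B M f).range = Algebra.adjoin R (Set.range f) := by
  refine le_antisymm ?_ (Algebra.adjoin_le ?_)
  · rintro _ ⟨z, rfl⟩
    change lift R B M f z ∈ _
    induction z using MonoidAlgebra.induction_on with
    | of m => exact Algebra.subset_adjoin ⟨m, (lift_of f m).symm⟩
    | add x y hx hy => rw [map_add]; exact add_mem hx hy
    | smul r x hx => rw [map_smul]; exact Subalgebra.smul_mem _ hx r
  · rintro _ ⟨m, rfl⟩
    exact ⟨of R M m, lift_of f m⟩

theorem isIntegral_of_pow_eq_one {R B : Type*} [CommRing R] [Ring B] [Algebra R B] {n : ℕ}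
    (hn : n ≠ 0) {x : B} (hx : x ^ n = 1) : IsIntegral R x :=
  .of_pow (Nat.pos_of_ne_zero hn) (hx ▸ isIntegral_one)

theorem minpoly_map_splits_of_pow_eq_one {F E K : Type*} [Field F] [Field E] [Field K]
    [Algebra F E] [Algebra F K] {n : ℕ} (hn : n ≠ 0) {ω : K} (hω : IsPrimitiveRoot ω n)
    {x : E} (hx : x ^ n = 1) : ((minpoly F x).map (algebraMap F K)).Splits := by
  have hdvd := Polynomial.map_dvd (algebraMap F K) <|
    minpoly.dvd F x (p := X ^ n - C 1) (by simp [hx])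
  rw [Polynomial.map_sub, Polynomial.map_pow, map_X, map_C, map_one] at hdvd
  exact (X_pow_sub_one_splits hω).of_dvd (X_pow_sub_C_ne_zero (Nat.pos_of_ne_zero hn) 1) hdvd

theorem LinearMap.map_mul_of_basis {R M N ι : Type*} [CommSemiring R] [Semiring M] [Algebra R M]
    [Semiring N] [Algebra R N] (b : Basis ι R M) (f : M →ₗ[R] N)
    (h : ∀ i j, f (b i * b j) = f (b i) * f (b j)) (x y : M) : f (x * y) = f x * f y := by
  have : (LinearMap.mul R M).compr₂ f = (LinearMap.mul R N).compl₁₂ f f :=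
    LinearMap.ext_basis b b h
  exact congrArg (fun B => B x y) this

def LinearEquiv.piComm (R : Type*) [Semiring R] {ι κ : Type*} (M : ι → κ → Type*)
    [∀ i k, AddCommMonoid (M i k)] [∀ i k, Module R (M i k)] :
    (∀ i k, M i k) ≃ₗ[R] ∀ k i, M i k :=
  { Equiv.piComm M with
    map_add' := fun _ _ => rfl
    map_smul' := fun _ _ => rfl }

section Characters

variable {F A K : Type*} [Field F] [CommGroup A] [Field K] [Algebra F K]

variable (F K) in
def charField (χ : A →* Kˣ) : IntermediateField F K :=
  adjoin F (Set.range fun a => (χ a : K))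

variable (F) in
theorem range_liftChar [Finite A] (χ : A →* Kˣ) :
    (liftChar F A K χ).range = (charField F K χ).toSubalgebra := by
  rw [charField, adjoin_toSubalgebra_of_isAlgebraic, liftChar, range_lift]
  · rfl
  rintro _ ⟨a, rfl⟩
  refine (isIntegral_of_pow_eq_one (Monoid.exponent_ne_zero_of_finite (G := A)) ?_).isAlgebraic
  rw [← Units.val_pow_eq_pow_val, ← map_pow, Monoid.pow_exponent_eq_one, map_one, Units.val_one]

variable (F) in
noncomputable def charHom [Finite A] (χ : A →* Kˣ) :
    MonoidAlgebra F A →ₐ[F] charField F K χ :=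
  (liftChar F A K χ).codRestrict _ fun z =>
    (mem_toSubalgebra _ _).mp (range_liftChar F χ ▸ AlgHom.mem_range_self _ z)

theorem coe_charHom_of [Finite A] (χ : A →* Kˣ) (a : A) :
    (charHom F χ (of F A a) : K) = χ a :=
  lift_of _ a

theorem charHom_surjective [Finite A] (χ : A →* Kˣ) : Function.Surjective (charHom F χ) := by
  rintro ⟨y, hy⟩
  obtain ⟨z, hz⟩ : y ∈ (liftChar F A K χ).range :=
    range_liftChar F χ ▸ (mem_toSubalgebra _ _).mpr hy
  exact ⟨z, Subtype.ext hz⟩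

theorem ker_charHom [Finite A] (χ : A →* Kˣ) :
    RingHom.ker (charHom F χ) = RingHom.ker (liftChar F A K χ).toRingHom := by
  ext z
  rw [RingHom.mem_ker, RingHom.mem_ker, ← ZeroMemClass.coe_eq_zero]
  rfl

theorem exists_algHom_ker_eq [Finite A] {ω : K} (hω : IsPrimitiveRoot ω (Monoid.exponent A))
    (m : Ideal (MonoidAlgebra F A)) [m.IsMaximal] :
    ∃ φ : MonoidAlgebra F A →ₐ[F] K, RingHom.ker φ.toRingHom = m := by
  let := Ideal.Quotient.field m
  let f : A →* MonoidAlgebra F A ⧸ m :=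
    (Ideal.Quotient.mkₐ F m : MonoidAlgebra F A →* _).comp (of F A)
  have hlift : lift F _ A f = Ideal.Quotient.mkₐ F m := (lift_unique' _).symm
  have htop : adjoin F (Set.range f) = ⊤ := by
    refine adjoin_eq_top_of_algebra F _ ?_
    rw [← range_lift, hlift, AlgHom.range_eq_top]
    exact Ideal.Quotient.mkₐ_surjective F m
  have hn := Monoid.exponent_ne_zero_of_finite (G := A)
  have hpow : ∀ a, f a ^ Monoid.exponent A = 1 := fun a => by
    rw [← map_pow, Monoid.pow_exponent_eq_one, map_one]
  obtain ⟨ψ⟩ := nonempty_algHom_of_adjoin_splits (K := K) (by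
    rintro _ ⟨a, rfl⟩
    exact ⟨isIntegral_of_pow_eq_one hn (hpow a),
      minpoly_map_splits_of_pow_eq_one hn hω (hpow a)⟩) htop
  refine ⟨ψ.comp (Ideal.Quotient.mkₐ F m), ?_⟩
  exact (RingHom.ker_comp_of_injective _ ψ.toRingHom.injective).trans Ideal.mk_ker

theorem bijective_pi_charHom [Fintype A] [NeZero (Nat.card A : F)] {ω : K}
    (hω : IsPrimitiveRoot ω (Monoid.exponent A)) {J : Type*} [Finite J] (χ : J → A →* Kˣ)
    (hinj : ∀ i j, RingHom.ker (liftChar F A K (χ i)).toRingHom =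
      RingHom.ker (liftChar F A K (χ j)).toRingHom → i = j)
    (hcover : ∀ φ : MonoidAlgebra F A →ₐ[F] K, ∃ j,
      RingHom.ker (liftChar F A K (χ j)).toRingHom = RingHom.ker φ.toRingHom) :
    Function.Bijective (AlgHom.pi fun j => charHom F (χ j)) := by
  have hmax : ∀ j, (RingHom.ker (charHom F (χ j))).IsMaximal := fun j =>
    RingHom.ker_isMaximal_of_surjective _ (charHom_surjective (χ j))
  constructor
  · refine (injective_iff_map_eq_zero _).mpr fun z hz => ?_
    have hjac : z ∈ Ring.jacobson (MonoidAlgebra F A) := by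
      rw [Ring.jacobson_eq_sInf_isMaximal]
      refine Submodule.mem_sInf.mpr fun m (hm : Ideal.IsMaximal m) => ?_
      obtain ⟨φ, rfl⟩ := exists_algHom_ker_eq hω m
      obtain ⟨j, hj⟩ := hcover φ
      rw [← hj, ← ker_charHom, RingHom.mem_ker]
      exact congrFun hz j
    rwa [IsSemisimpleRing.jacobson_eq_bot] at hjac
  · intro y
    choose x hx using fun j => charHom_surjective (χ j) (y j)
    have hcop : Pairwise fun i j =>
        IsCoprime (RingHom.ker (charHom F (χ i))) (RingHom.ker (charHom F (χ j))) :=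
      fun i j hij => Ideal.isCoprime_iff_sup_eq.mpr <| (hmax i).coprime_of_ne (hmax j) fun h =>
        hij (hinj i j (by rwa [← ker_charHom, ← ker_charHom]))
    obtain ⟨z, hz⟩ := Ideal.exists_forall_sub_mem_ideal hcop x
    refine ⟨z, funext fun j => ?_⟩
    rw [AlgHom.pi_apply, ← hx j, ← sub_eq_zero, ← map_sub]
    exact hz j

end Characters

section TwistedDecomposition

variable {F G A J : Type*} [CommRing F] [CommMonoid A] [Finite G]
  {R : J → Type*} [∀ j, CommRing (R j)] [∀ j, Algebra F (R j)]
  (ψ : MonoidAlgebra F A ≃ₐ[F] ∀ j, R j)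
  {T : Type*} [Ring T] [Algebra F T] (u : Basis (G × A) F T)
  {B : J → Type*} [∀ j, Ring (B j)] [∀ j, Algebra (R j) (B j)] [∀ j, Algebra F (B j)]
  [∀ j, IsScalarTower F (R j) (B j)] (v : ∀ j, Basis G (R j) (B j))

noncomputable def decompositionEquiv : T ≃ₗ[F] ∀ j, B j :=
  u.repr ≪≫ₗ Finsupp.curryLinearEquiv F ≪≫ₗ
    Finsupp.mapRange.linearEquiv ((coeffLinearEquiv F).symm ≪≫ₗ ψ.toLinearEquiv) ≪≫ₗ
    Finsupp.linearEquivFunOnFinite F _ G ≪≫ₗ LinearEquiv.piComm F (fun _ j => R j) ≪≫ₗ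
    LinearEquiv.piCongrRight fun j => ((v j).equivFun.restrictScalars F).symm

theorem decompositionEquiv_basis (g : G) (a : A) (j : J) :
    decompositionEquiv ψ u v (u (g, a)) j = ψ (of F A a) j • v j g := by
  simp only [decompositionEquiv, LinearEquiv.trans_apply, LinearEquiv.piCongrRight_apply,
    LinearEquiv.restrictScalars_symm_apply, LinearEquiv.symm_apply_eq]
  ext g'
  simp only [LinearEquiv.piComm]
  obtain rfl | hg := eq_or_ne g g' <;> simp [Function.swap, *]

variable [Monoid G]

theorem decompositionEquiv_mul (α : G → G → F) (σ : G → G → A)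
    (hu : ∀ g a h b, u (g, a) * u (h, b) = α g h • u (g * h, a * b * σ g h))
    (hv : ∀ j g h, v j g * v j h =
      (algebraMap F (R j) (α g h) * ψ (of F A (σ g h)) j) • v j (g * h)) (x y : T) :
    decompositionEquiv ψ u v (x * y) =
      decompositionEquiv ψ u v x * decompositionEquiv ψ u v y := by
  refine (decompositionEquiv ψ u v).toLinearMap.map_mul_of_basis u ?_ x y
  rintro ⟨g, a⟩ ⟨h, b⟩
  funext j
  simp only [LinearEquiv.coe_coe, hu, map_smul, Pi.smul_apply, Pi.mul_apply,
    decompositionEquiv_basis, smul_mul_smul_comm, hv, smul_smul, map_mul,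
    ← algebraMap_smul (R j) (α g h)]
  ring_nf

theorem nonempty_algEquiv_pi_of_basis (α : G → G → F) (σ : G → G → A)
    (hu : ∀ g a h b, u (g, a) * u (h, b) = α g h • u (g * h, a * b * σ g h))
    (hv : ∀ j g h, v j g * v j h =
      (algebraMap F (R j) (α g h) * ψ (of F A (σ g h)) j) • v j (g * h)) :
    Nonempty (T ≃ₐ[F] ∀ j, B j) :=
  have hmul := decompositionEquiv_mul ψ u v α σ hu hv
  ⟨.ofLinearEquiv _ (MulEquiv.mk (decompositionEquiv ψ u v).toEquiv hmul).map_one hmul⟩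

end TwistedDecomposition

section CentralExtension

variable {A S G : Type*} [Group A] [Group S] [Group G] {ι : A →* S} {π : S →* G} {s : G → S}

theorem map_mul_section_eq (hexact : π.ker = ι.range) (hs : ∀ g, π (s g) = g) (a : A) (g : G) :
    π (ι a * s g) = g := by
  rw [map_mul, (MonoidHom.mem_ker.mp (hexact ▸ ⟨a, rfl⟩ : ι a ∈ π.ker)), hs, one_mul]

theorem bijective_mul_section (hι : Function.Injective ι) (hexact : π.ker = ι.range)
    (hs : ∀ g, π (s g) = g) : Function.Bijective fun p : G × A => ι p.2 * s p.1 := by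
  constructor
  · rintro ⟨g, a⟩ ⟨h, b⟩ hab
    obtain rfl : g = h := by
      simpa only [map_mul_section_eq hexact hs] using congrArg π hab
    exact Prod.ext rfl (hι (mul_right_cancel hab))
  · intro x
    obtain ⟨a, ha⟩ : x * (s (π x))⁻¹ ∈ ι.range := by
      rw [← hexact, MonoidHom.mem_ker, map_mul, map_inv, hs, mul_inv_cancel]
    exact ⟨(π x, a), by simp [ha]⟩

theorem mul_section_mul_mul_section (hcentral : ∀ a, ι a ∈ Subgroup.center S)
    {σ : G → G → A} (hσ : ∀ g h, s g * s h = ι (σ g h) * s (g * h))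
    (a : A) (g : G) (b : A) (h : G) :
    ι a * s g * (ι b * s h) = ι (a * b * σ g h) * s (g * h) := by
  calc ι a * s g * (ι b * s h) = ι a * (s g * ι b) * s h := by group
    _ = ι a * ι b * (s g * s h) := by rw [Subgroup.mem_center_iff.mp (hcentral b)]; group
    _ = ι (a * b * σ g h) * s (g * h) := by rw [hσ]; simp only [map_mul]; group

end CentralExtension

theorem stmt_14_general (A S G : Type*) [CommGroup A] [Group S] [Group G]
    [Fintype A] [Fintype G]
    (ι : A →* S) (hι : Function.Injective ι)
    (hcentral : ∀ a : A, ι a ∈ Subgroup.center S)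
    (π : S →* G) (hexact : π.ker = ι.range)
    (s : G → S) (hs : ∀ g, π (s g) = g)
    (σ : G → G → A) (hσ : ∀ g h, s g * s h = ι (σ g h) * s (g * h))
    (F : Type*) [Field F] (hcharF : (Fintype.card A : F) ≠ 0)
    (K : Type*) [Field K] [Algebra F K]
    (ω : K) (hω : IsPrimitiveRoot ω (Monoid.exponent A))
    (I : Finset (A →* Kˣ))
    (hI1 : ∀ χ ∈ I, ∀ χ' ∈ I,
      RingHom.ker (liftChar F A K χ).toRingHom = RingHom.ker (liftChar F A K χ').toRingHom →
        χ = χ')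
    (hI2 : ∀ φ : MonoidAlgebra F A →ₐ[F] K, ∃ χ ∈ I,
      RingHom.ker (liftChar F A K χ).toRingHom = RingHom.ker φ.toRingHom)
    (α' : G → G → Fˣ)
    (α : S → S → Fˣ) (hinfl : ∀ x y : S, α x y = α' (π x) (π y))
    (L : {χ // χ ∈ I} → IntermediateField F K)
    (hL : ∀ χ : {χ // χ ∈ I},
      L χ = IntermediateField.adjoin F (Set.range fun a : A => ((χ.1 a : Kˣ) : K)))
    (c : ∀ χ : {χ // χ ∈ I}, G → G → L χ)
    (hc : ∀ (χ : {χ // χ ∈ I}) (g h : G),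
      ((c χ g h : K)) = algebraMap F K ((α' g h : Fˣ) : F) * ((χ.1 (σ g h) : Kˣ) : K))
    (B : {χ // χ ∈ I} → Type*) [∀ χ, Ring (B χ)] [∀ χ, Algebra (L χ) (B χ)]
    [∀ χ, Algebra F (B χ)] [∀ χ, IsScalarTower F (L χ) (B χ)]
    (v : ∀ χ : {χ // χ ∈ I}, Module.Basis G (L χ) (B χ))
    (hv : ∀ (χ : {χ // χ ∈ I}) (g h : G), v χ g * v χ h = c χ g h • v χ (g * h))
    (T : Type*) [Ring T] [Algebra F T] (u : Module.Basis S F T)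
    (hu : ∀ x y : S, u x * u y = ((α x y : Fˣ) : F) • u (x * y)) :
    Nonempty (T ≃ₐ[F] ∀ χ : {χ // χ ∈ I}, B χ) := by
  obtain rfl : L = fun χ => charField F K χ.1 := funext hL
  have : NeZero (Nat.card A : F) := ⟨by rwa [Nat.card_eq_fintype_card]⟩
  let ψ := AlgEquiv.ofBijective _ <| bijective_pi_charHom hω (fun χ : {χ // χ ∈ I} => χ.1)
    (fun χ χ' h => Subtype.ext (hI1 _ χ.2 _ χ'.2 h))
    (fun φ => let ⟨χ, hχ, h⟩ := hI2 φ; ⟨⟨χ, hχ⟩, h⟩)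
  let e := Equiv.ofBijective _ (bijective_mul_section hι hexact hs)
  refine nonempty_algEquiv_pi_of_basis ψ (u.reindex e.symm) v (fun g h => (α' g h : F)) σ ?_ ?_
  · intro g a h b
    simp only [e, Basis.reindex_apply, Equiv.symm_symm, Equiv.ofBijective_apply, hu, hinfl,
      map_mul_section_eq hexact hs, mul_section_mul_mul_section hcentral hσ]
  · intro χ g h
    rw [hv]
    congr 1
    apply Subtype.ext
    simp only [hc, MulMemClass.coe_mul, coe_algebraMap_apply, ψ, AlgEquiv.ofBijective_apply,
      AlgHom.pi_apply, coe_charHom_of]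

/-- Let `1 → A → S → G → 1` be a central extension of finite groups, `F` a field whose
characteristic does not divide `|A|`, and `α ∈ Z²(S, Fˣ)` inflated from `α' ∈ Z²(G, Fˣ)`.
Fix a 2-cocycle `σ ∈ Z²(G, A)` corresponding to the extension (via a section `s`).  Then
`F^α S ≅ ⊕_{χ ∈ Irr(A,F)} F(χ)^{α_χ} G` as `F`-algebras, where for a character
`χ : A → Kˣ` (`K` a splitting field of `A` over `F`, i.e. containing a primitive
`exp(A)`-th root of unity), `α_χ(g,h) = α'(g,h)·χ(σ(g,h))` and `F(χ)` is the field
generated over `F` by the values of `χ`.  Here `Irr(A,F)` contains, for each simple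
`FA`-module, exactly one character with the corresponding kernel. -/
theorem stmt_14 (A S G : Type*) [CommGroup A] [Group S] [Group G]
    [Fintype A] [Fintype S] [Fintype G]
    (ι : A →* S) (hι : Function.Injective ι)
    (hcentral : ∀ a : A, ι a ∈ Subgroup.center S)
    (π : S →* G) (hπ : Function.Surjective π) (hexact : π.ker = ι.range)
    (s : G → S) (hs : ∀ g, π (s g) = g)
    (σ : G → G → A) (hσ : ∀ g h, s g * s h = ι (σ g h) * s (g * h))
    (F : Type*) [Field F] (hcharF : (Fintype.card A : F) ≠ 0)
    (K : Type*) [Field K] [Algebra F K]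
    (ω : K) (hω : IsPrimitiveRoot ω (Monoid.exponent A))
    (I : Finset (A →* Kˣ))
    (hI1 : ∀ χ ∈ I, ∀ χ' ∈ I,
      RingHom.ker (liftChar F A K χ).toRingHom = RingHom.ker (liftChar F A K χ').toRingHom →
        χ = χ')
    (hI2 : ∀ φ : MonoidAlgebra F A →ₐ[F] K, ∃ χ ∈ I,
      RingHom.ker (liftChar F A K χ).toRingHom = RingHom.ker φ.toRingHom)
    (α' : G → G → Fˣ) (hα' : IsTwoCocycle' α')
    (α : S → S → Fˣ) (hinfl : ∀ x y : S, α x y = α' (π x) (π y))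
    (L : {χ // χ ∈ I} → IntermediateField F K)
    (hL : ∀ χ : {χ // χ ∈ I},
      L χ = IntermediateField.adjoin F (Set.range fun a : A => ((χ.1 a : Kˣ) : K)))
    (c : ∀ χ : {χ // χ ∈ I}, G → G → L χ)
    (hc : ∀ (χ : {χ // χ ∈ I}) (g h : G),
      ((c χ g h : K)) = algebraMap F K ((α' g h : Fˣ) : F) * ((χ.1 (σ g h) : Kˣ) : K))
    (B : {χ // χ ∈ I} → Type*) [∀ χ, Ring (B χ)] [∀ χ, Algebra (L χ) (B χ)]
    [∀ χ, Algebra F (B χ)] [∀ χ, IsScalarTower F (L χ) (B χ)]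
    (v : ∀ χ : {χ // χ ∈ I}, Module.Basis G (L χ) (B χ))
    (hv : ∀ (χ : {χ // χ ∈ I}) (g h : G), v χ g * v χ h = c χ g h • v χ (g * h))
    (T : Type*) [Ring T] [Algebra F T] (u : Module.Basis S F T)
    (hu : ∀ x y : S, u x * u y = ((α x y : Fˣ) : F) • u (x * y)) :
    Nonempty (T ≃ₐ[F] ∀ χ : {χ // χ ∈ I}, B χ) :=
  stmt_14_general A S G ι hι hcentral π hexact s hs σ hσ F hcharF K ω hω I hI1 hI2 α' α hinfl L hL c
    hc B v hv T u hu
end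

section
/- Let G be a finite group and let α ∈ Z^2(G, C^*) be a 2-cocycle whose class has finite order n in H^2(G, C^*). If r is a natural number coprime to n, then the complex twisted group algebras C^α G and C^{α^r} G are isomorphic as rings. -/
/-- The group of 2-cocycles on `G` with values in `M` (trivial action). -/
def twoCocycles (G M : Type*) [Group G] [CommGroup M] : Subgroup (G → G → M) where
  carrier := {α | IsTwoCocycle' α}
  one_mem' := fun _ _ _ => by simp
  mul_mem' := fun {a b} ha hb g h k => by
    simp only [Pi.mul_apply]
    rw [mul_mul_mul_comm, ha g h k, hb g h k, mul_mul_mul_comm]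
  inv_mem' := fun {a} ha g h k => by
    simp only [Pi.inv_apply]
    rw [← mul_inv, ha g h k, mul_inv]

/-- The 2-coboundary associated to a 1-cochain `μ`. -/
def coboundaryFun {G M : Type*} [Group G] [CommGroup M] (μ : G → M) : G → G → M :=
  fun g h => μ g * μ h * (μ (g * h))⁻¹

lemma coboundaryFun_isTwoCocycle {G M : Type*} [Group G] [CommGroup M] (μ : G → M) :
    IsTwoCocycle' (coboundaryFun μ) := by
  intro g h k
  simp only [coboundaryFun, mul_assoc]
  simp [mul_comm, mul_left_comm, mul_assoc]

/-- The coboundary homomorphism. -/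
def coboundaryHom (G M : Type*) [Group G] [CommGroup M] : (G → M) →* twoCocycles G M where
  toFun μ := ⟨coboundaryFun μ, coboundaryFun_isTwoCocycle μ⟩
  map_one' := by
    refine Subtype.ext (funext fun g => funext fun h => ?_)
    simp [coboundaryFun]
  map_mul' μ ν := by
    refine Subtype.ext (funext fun g => funext fun h => ?_)
    simp only [coboundaryFun, Pi.mul_apply, Subgroup.coe_mul, mul_inv]
    simp [mul_comm, mul_left_comm, mul_assoc]

/-- The second cohomology group of `G` with coefficients in `M` (trivial action). -/
def H2 (G M : Type*) [Group G] [CommGroup M] :=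
  twoCocycles G M ⧸ (coboundaryHom G M).range

noncomputable instance (G M : Type*) [Group G] [CommGroup M] : CommGroup (H2 G M) :=
  QuotientGroup.Quotient.commGroup _

/-- The class of a 2-cocycle in second cohomology. -/
def H2.mk {G M : Type*} [Group G] [CommGroup M] (a : twoCocycles G M) : H2 G M :=
  QuotientGroup.mk a

/-!
The class of `α` has order `n`, so `α ^ n` is a coboundary `δμ`; extracting `n`-th roots of `μ`
in `ℂ` replaces `α` by a cohomologous cocycle `β` with values in the `n`-th roots of unity
(Brauer's trick). The cyclotomic automorphism `ζ ↦ ζ ^ r` of `ℚ(ζ)` extends to a field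
automorphism `σ` of `ℂ`, and `σ ∘ β = β ^ r`, so `σ ∘ α` is cohomologous to `α ^ r`. Applying `σ`
to the coordinates and rescaling the basis by the resulting 1-cochain is then a ring isomorphism
`ℂ^α G ≃+* ℂ^{α^r} G`.
-/

section Coboundary

variable {G M : Type*} [Group G] [CommGroup M]

lemma coboundaryFun_one : coboundaryFun (1 : G → M) = 1 :=
  congrArg Subtype.val (map_one (coboundaryHom G M))

lemma coboundaryFun_mul (μ ν : G → M) :
    coboundaryFun (μ * ν) = coboundaryFun μ * coboundaryFun ν :=
  congrArg Subtype.val (map_mul (coboundaryHom G M) μ ν)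

lemma coboundaryFun_pow (μ : G → M) (n : ℕ) : coboundaryFun (μ ^ n) = coboundaryFun μ ^ n :=
  congrArg Subtype.val (map_pow (coboundaryHom G M) μ n)

lemma H2.exists_pow_eq_coboundaryFun {a : twoCocycles G M} {n : ℕ} (h : H2.mk a ^ n = 1) :
    ∃ μ : G → M, (a : G → G → M) ^ n = coboundaryFun μ := by
  obtain ⟨μ, hμ⟩ := (QuotientGroup.eq_one_iff (a ^ n)).mp h
  exact ⟨μ, by rw [← SubmonoidClass.coe_pow, ← hμ]; rfl⟩

lemma exists_map_eq_pow_mul_coboundaryFun (φ : M →* M) {n r : ℕ}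
    (hφ : ∀ x : M, x ^ n = 1 → φ x = x ^ r) {α : G → G → M} {ν : G → M}
    (hν : (α * coboundaryFun ν) ^ n = 1) :
    ∃ t : G → M, ∀ g h, φ (α g h) = α g h ^ r * coboundaryFun t g h := by
  refine ⟨ν ^ r / φ ∘ ν, fun g h => ?_⟩
  have hβ := hφ _ (congrFun (congrFun hν g) h)
  rw [Pi.mul_apply, Pi.mul_apply, map_mul, ← eq_mul_inv_iff_mul_eq] at hβ
  rw [hβ]
  simp only [coboundaryFun, map_mul, map_inv, Pi.div_apply, Pi.pow_apply, Function.comp_apply,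
    mul_pow, inv_pow, div_eq_mul_inv, mul_inv, inv_inv]
  ac_rfl

end Coboundary

lemma exists_mul_coboundaryFun_pow_eq_one {G K : Type*} [Group G] [Field K] [IsAlgClosed K]
    {n : ℕ} (hn : 0 < n) {α : G → G → Kˣ} {μ : G → Kˣ} (hμ : α ^ n = coboundaryFun μ) :
    ∃ ν : G → Kˣ, (α * coboundaryFun ν) ^ n = 1 := by
  have hroot (x : Kˣ) : ∃ y : Kˣ, y ^ n = x := by
    obtain ⟨z, hz⟩ := IsAlgClosed.exists_pow_nat_eq (x : K) hn
    exact ⟨Units.mk0 z (ne_zero_pow hn.ne' (hz ▸ x.ne_zero)), Units.ext hz⟩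
  choose ν hν using fun g => hroot (μ g)⁻¹
  refine ⟨ν, ?_⟩
  rw [mul_pow, hμ, ← coboundaryFun_pow, ← coboundaryFun_mul,
    show μ * ν ^ n = 1 from funext fun g => by simp [hν], coboundaryFun_one]

theorem RingEquiv.exists_extend_of_isAlgClosed {R L : Type*} [CommRing R] [IsDomain R] [Field L]
    [IsAlgClosed L] [Algebra R L] [FaithfulSMul R L] (τ : R ≃+* R) :
    ∃ σ : L ≃+* L, ∀ x : R, σ (algebraMap R L x) = algebraMap R L (τ x) := by
  obtain ⟨s, hs⟩ := exists_isTranscendenceBasis R (A := L)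
  have := IsAlgClosed.isAlgClosure_of_transcendence_basis _ hs
  -- `τ` acts coefficientwise on `R[s] ≅ MvPolynomial s R`, of which `L` is an algebraic closure.
  let θ := (hs.1.aevalEquiv.symm.toRingEquiv.trans (MvPolynomial.mapEquiv s τ)).trans
    hs.1.aevalEquiv.toRingEquiv
  have hθ (x : R) : θ (algebraMap R _ x) = algebraMap R _ (τ x) := by
    have hC : hs.1.aevalEquiv.symm (algebraMap R _ x) = MvPolynomial.C x := by
      rw [AlgEquiv.symm_apply_eq, ← MvPolynomial.algebraMap_eq, AlgEquiv.commutes]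
    simp only [θ, RingEquiv.trans_apply, AlgEquiv.coe_ringEquiv, hC, MvPolynomial.mapEquiv_apply]
    rw [MvPolynomial.map_C, ← MvPolynomial.algebraMap_eq, AlgEquiv.commutes]
    rfl
  refine ⟨IsAlgClosure.equivOfEquiv L L θ, fun x => ?_⟩
  have := IsAlgClosure.equivOfEquiv_algebraMap L L θ (algebraMap R _ x)
  rwa [hθ, ← IsScalarTower.algebraMap_apply, ← IsScalarTower.algebraMap_apply] at this

theorem IsAlgClosed.exists_ringEquiv_apply_eq_pow (K : Type*) [Field K] [CharZero K]
    [IsAlgClosed K] {n : ℕ} (hn : 0 < n) {r : ℕ} (hr : r.Coprime n) :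
    ∃ σ : K ≃+* K, ∀ z : K, z ^ n = 1 → σ z = z ^ r := by
  have : NeZero n := ⟨hn.ne'⟩
  obtain ⟨ζ, hζ⟩ := HasEnoughRootsOfUnity.exists_primitiveRoot K n
  let L := Algebra.adjoin ℚ ({ζ} : Set K)
  have := hζ.adjoin_isCyclotomicExtension ℚ
  have hzeta := IsCyclotomicExtension.zeta_spec n ℚ L
  let τ := IsCyclotomicExtension.fromZetaAut (hzeta.pow_of_coprime r hr)
    (Polynomial.cyclotomic.irreducible_rat hn)
  obtain ⟨σ, hσ⟩ := τ.toRingEquiv.exists_extend_of_isAlgClosed (L := K)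
  have hzetaK := hzeta.map_of_injective (FaithfulSMul.algebraMap_injective L K)
  refine ⟨σ, fun z hz => ?_⟩
  obtain ⟨i, -, rfl⟩ := hzetaK.eq_pow_of_pow_eq_one hz
  rw [map_pow, hσ, AlgEquiv.coe_ringEquiv, IsCyclotomicExtension.fromZetaAut_spec, map_pow,
    ← pow_mul, ← pow_mul, mul_comm]

lemma LinearMap.map_mul_of_map_mul_basis {K A B ι : Type*} [CommSemiring K] [Semiring A]
    [Algebra K A] [Semiring B] [Algebra K B] {σ : K →+* K} (f : A →ₛₗ[σ] B)
    (u : Module.Basis ι K A) (hf : ∀ i j, f (u i * u j) = f (u i) * f (u j)) (x y : A) :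
    f (x * y) = f x * f y := by
  have hright (j : ι) : f.comp (LinearMap.mulRight K (u j)) =
      (LinearMap.mulRight K (f (u j))).comp f := u.ext fun i => hf i j
  have hleft : f.comp (LinearMap.mulLeft K x) = (LinearMap.mulLeft K (f x)).comp f :=
    u.ext fun j => LinearMap.congr_fun (hright j) x
  exact LinearMap.congr_fun hleft y

theorem nonempty_ringEquiv_of_map_cohomologous {K G A B : Type*} [Mul G] [CommRing K] [Ring A]
    [Algebra K A] [Ring B] [Algebra K B] (σ : K ≃+* K) {α β : G → G → K} (t : G → Kˣ)
    (hσ : ∀ g h, σ (α g h) * t (g * h) = β g h * (t g * t h))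
    (u : Module.Basis G K A) (hu : ∀ g h, u g * u h = α g h • u (g * h))
    (v : Module.Basis G K B) (hv : ∀ g h, v g * v h = β g h • v (g * h)) :
    Nonempty (A ≃+* B) := by
  have := RingHomInvPair.of_ringEquiv σ
  have := RingHomInvPair.symm (σ : K →+* K) (σ.symm : K →+* K)
  let e : A ≃ₛₗ[(σ : K →+* K)] B :=
    (u.repr.trans (Finsupp.mapRange.linearEquiv σ.toSemilinearEquiv)).trans
      (v.unitsSMul t).repr.symm
  have he (g : G) : e (u g) = (t g : K) • v g := by
    simp [e, Module.Basis.unitsSMul_apply, Units.smul_def]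
  refine ⟨AddEquiv.toRingEquiv e.toAddEquiv (e.toLinearMap.map_mul_of_map_mul_basis u ?_)⟩
  intro g h
  simp only [LinearEquiv.coe_coe, hu, LinearEquiv.map_smulₛₗ, he, smul_mul_smul_comm, hv, smul_smul]
  rw [RingEquiv.coe_toRingHom, hσ, mul_comm (β g h)]

theorem stmt_17_general (G : Type*) [Group G]
    (α : G → G → ℂˣ) (hα : IsTwoCocycle' α)
    (n : ℕ) (hn : 0 < n)
    (hord : orderOf (H2.mk (⟨α, hα⟩ : twoCocycles G ℂˣ)) = n)
    (r : ℕ) (hr : Nat.Coprime r n)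
    (A : Type*) [Ring A] [Algebra ℂ A] (u : Module.Basis G ℂ A)
    (hu : ∀ g h : G, u g * u h = ((α g h : ℂˣ) : ℂ) • u (g * h))
    (B : Type*) [Ring B] [Algebra ℂ B] (v : Module.Basis G ℂ B)
    (hv : ∀ g h : G, v g * v h = (((α g h) ^ r : ℂˣ) : ℂ) • v (g * h)) :
    Nonempty (A ≃+* B) := by
  obtain ⟨μ, hμ⟩ := H2.exists_pow_eq_coboundaryFun (hord ▸ pow_orderOf_eq_one _)
  obtain ⟨ν, hν⟩ := exists_mul_coboundaryFun_pow_eq_one hn hμ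
  obtain ⟨σ, hσ⟩ := IsAlgClosed.exists_ringEquiv_apply_eq_pow ℂ hn hr
  have hσ_units (x : ℂˣ) (hx : x ^ n = 1) : Units.map (σ : ℂ →* ℂ) x = x ^ r :=
    Units.ext (hσ x (by simpa using congrArg Units.val hx))
  obtain ⟨t, ht⟩ := exists_map_eq_pow_mul_coboundaryFun _ hσ_units hν
  refine nonempty_ringEquiv_of_map_cohomologous σ t (fun g h => ?_) u hu v hv
  have htgh := congrArg Units.val (ht g h)
  simp only [coboundaryFun, Units.coe_map, MonoidHom.coe_coe, Units.val_mul,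
    Units.val_pow_eq_pow_val, Units.val_inv_eq_inv_val] at htgh ⊢
  rw [htgh]
  field_simp

/-- Let `G` be a finite group and `α ∈ Z²(G, ℂˣ)` a 2-cocycle whose class has finite order
`n` in `H²(G, ℂˣ)`.  If `r` is a natural number coprime to `n`, then the complex twisted
group algebras `ℂ^α G` and `ℂ^{α^r} G` are isomorphic as rings. -/
theorem stmt_17 (G : Type*) [Group G] [Fintype G]
    (α : G → G → ℂˣ) (hα : IsTwoCocycle' α)
    (n : ℕ) (hn : 0 < n)
    (hord : orderOf (H2.mk (⟨α, hα⟩ : twoCocycles G ℂˣ)) = n)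
    (r : ℕ) (hr : Nat.Coprime r n)
    (A : Type*) [Ring A] [Algebra ℂ A] (u : Module.Basis G ℂ A)
    (hu : ∀ g h : G, u g * u h = ((α g h : ℂˣ) : ℂ) • u (g * h))
    (B : Type*) [Ring B] [Algebra ℂ B] (v : Module.Basis G ℂ B)
    (hv : ∀ g h : G, v g * v h = (((α g h) ^ r : ℂˣ) : ℂ) • v (g * h)) :
    Nonempty (A ≃+* B) :=
  stmt_17_general G α hα n hn hord r hr A u hu B v hv
end
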